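/- arXiv:2402.08860 — 8 statements merged into one kernel-verified Lean document; each statement's English description precedes it below -/
import Mathlib

section
/- Let X be a Tychonoff topological space. Then the space C_p(X) is von Neumann complete (i.e., every precompact subset of C_p(X) is relatively compact; equivalently, every closed precompact subset is compact) if and only if X is discrete. -/
open Filter Topology Bornology Pointwise
open scoped ENNReal NNReal

noncomputable section

/-- The space of continuous real-valued functions on `X` regarded as a linear subspace of
`X → ℝ`; with the subspace topology it is exactly `C_p(X)` (the topology of pointwise
convergence). -/
def cP (X : Type*) [TopologicalSpace X] : Submodule ℝ (X → ℝ) where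
  carrier := {f | Continuous f}
  add_mem' := fun hf hg => hf.add hg
  zero_mem' := continuous_const
  smul_mem' := fun c _f hf => hf.const_smul c

/-!
If `X` is discrete, every function is continuous, so `C_p(X) = ℝ^X` is complete and precompact
sets are relatively compact. Conversely, in a Tychonoff space finitely many values can be
interpolated by a continuous function, so the continuous `[0,1]`-valued functions are dense in the
cube `[0,1]^X`. They also form a closed precompact subset of `C_p(X)`; if it is compact, it is
closed in `ℝ^X` and hence the whole cube, so every indicator function is continuous.
-/

open Set

lemma totallyBounded_iff_subset_finite_add_nhds_zero {E : Type*} [UniformSpace E]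
    [AddCommGroup E] [IsUniformAddGroup E] {A : Set E} :
    TotallyBounded A ↔ ∀ U ∈ 𝓝 (0 : E), ∃ F : Set E, F.Finite ∧ A ⊆ F + U := by
  simp only [totallyBounded_iff_subset_finite_iUnion_nhds_zero, ← iUnion_add_left_image,
    ← image_vadd, vadd_eq_add]

lemma CompletelyRegularSpace.exists_continuous_one_eqOn_zero {X : Type*} [TopologicalSpace X]
    [CompletelyRegularSpace X] {x : X} {K : Set X} (hK : IsClosed K) (hx : x ∉ K) :
    ∃ φ : X → ℝ, Continuous φ ∧ φ x = 1 ∧ EqOn φ 0 K := by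
  obtain ⟨f, hf, hfx, hfK⟩ := CompletelyRegularSpace.completely_regular x K hK hx
  refine ⟨fun y => 1 - f y, continuous_const.sub (continuous_subtype_val.comp hf), ?_, ?_⟩
  · simp [hfx]
  · intro y hy
    simp [hfK hy]

lemma exists_continuous_eqOn_finset {X : Type*} [TopologicalSpace X] [T35Space X]
    (I : Finset X) (g : X → ℝ) : ∃ f : X → ℝ, Continuous f ∧ EqOn f g I := by
  classical
  have bump (i : X) : ∃ φ : X → ℝ, Continuous φ ∧ φ i = 1 ∧ EqOn φ 0 (I.erase i) :=
    CompletelyRegularSpace.exists_continuous_one_eqOn_zero (I.erase i).finite_toSet.isClosed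
      (by simp)
  choose φ hφ hφ_one hφ_zero using bump
  refine ⟨fun x => ∑ i ∈ I, g i * φ i x,
    continuous_finsetSum _ fun i _ => continuous_const.mul (hφ i), fun j hj => ?_⟩
  dsimp only
  rw [Finset.sum_eq_single_of_mem j hj fun i _ hij => by
    simp [hφ_zero i (Finset.mem_erase.2 ⟨hij.symm, hj⟩)]]
  simp [hφ_one]

section CP

variable {X : Type*} [TopologicalSpace X]

instance : IsUniformAddGroup (cP X) := (cP X).toAddSubgroup.isUniformAddGroup

lemma dense_cP [T35Space X] : Dense (cP X : Set (X → ℝ)) := by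
  intro g
  rw [mem_closure_iff_nhds, nhds_pi]
  rintro U hU
  obtain ⟨I, t, ht, hIU⟩ := mem_pi'.1 hU
  obtain ⟨f, hf, hfg⟩ := exists_continuous_eqOn_finset I g
  exact ⟨f, hIU fun j hj => hfg hj ▸ mem_of_mem_nhds (ht j), hf⟩

lemma pi_Icc_subset_closure_cP_inter [T35Space X] :
    univ.pi (fun _ : X => Icc (0 : ℝ) 1) ⊆
      closure ((cP X : Set (X → ℝ)) ∩ univ.pi fun _ => Icc 0 1) := by
  set r : (X → ℝ) → X → ℝ := fun f x => projIcc 0 1 zero_le_one (f x)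
  have hr : Continuous r :=
    continuous_pi fun x =>
      continuous_subtype_val.comp (continuous_projIcc.comp (continuous_apply x))
  have hr_cP : r '' cP X ⊆ (cP X : Set (X → ℝ)) ∩ univ.pi fun _ => Icc 0 1 := by
    rintro _ ⟨f, hf, rfl⟩
    exact ⟨continuous_subtype_val.comp (continuous_projIcc.comp hf),
      fun x _ => (projIcc 0 1 zero_le_one (f x)).2⟩
  intro g hg
  have hrg : r g = g := funext fun x => by simp [r, projIcc_of_mem _ (hg x (mem_univ x))]
  exact closure_mono hr_cP (image_closure_subset_closure_image hr ⟨g, dense_cP g, hrg⟩)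

lemma discreteTopology_of_pi_Icc_subset_cP
    (h : univ.pi (fun _ : X => Icc (0 : ℝ) 1) ⊆ cP X) : DiscreteTopology X := by
  classical
  refine discreteTopology_iff_forall_isOpen.2 fun S => ?_
  have hS : S = S.indicator 1 ⁻¹' Ioi (0 : ℝ) := by
    ext x
    by_cases hx : x ∈ S <;> simp [hx]
  have hcont : Continuous (S.indicator (1 : X → ℝ)) := h fun x _ => by
    by_cases hx : x ∈ S <;> simp [hx]
  exact hS ▸ isOpen_Ioi.preimage hcont

instance [DiscreteTopology X] : CompleteSpace (cP X) := by
  have hcP : (cP X : Set (X → ℝ)) = univ :=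
    eq_univ_of_forall fun _ => continuous_of_discreteTopology
  have : IsClosed (cP X : Set (X → ℝ)) := hcP ▸ isClosed_univ
  exact IsClosed.completeSpace_coe

end CP

/-- For a Tychonoff space `X`, the space `C_p(X)` is von Neumann complete (every precompact
subset — i.e. every set `A` such that for each neighborhood `U` of `0` there is a finite set `F`
with `A ⊆ F + U` — is relatively compact) if and only if `X` is discrete. -/
theorem cp_vonNeumannComplete_iff_discrete (X : Type*) [TopologicalSpace X] [T35Space X] :
    (∀ A : Set ↥(cP X),
        (∀ U ∈ nhds (0 : ↥(cP X)), ∃ F : Set ↥(cP X), F.Finite ∧ A ⊆ F + U) →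
        IsCompact (closure A)) ↔ DiscreteTopology X := by
  simp only [← totallyBounded_iff_subset_finite_add_nhds_zero]
  constructor
  · intro h
    set Q : Set (X → ℝ) := univ.pi fun _ => Icc 0 1
    have hQ : IsCompact Q := isCompact_univ_pi fun _ => isCompact_Icc
    have hK : IsCompact (Subtype.val ⁻¹' Q : Set (cP X)) := by
      simpa only [(hQ.isClosed.preimage continuous_subtype_val).closure_eq] using
        h _ (totallyBounded_preimage isUniformEmbedding_subtype_val.isUniformInducing
          hQ.totallyBounded)
    have hclosed : IsClosed ((cP X : Set (X → ℝ)) ∩ Q) :=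
      Subtype.image_preimage_coe (cP X : Set (X → ℝ)) Q ▸
        (hK.image continuous_subtype_val).isClosed
    exact discreteTopology_of_pi_Icc_subset_cP <|
      pi_Icc_subset_closure_cP_inter.trans (hclosed.closure_eq.subset.trans inter_subset_left)
  · intro _ A hA
    exact hA.closure.isCompact_of_isClosed isClosed_closure
end
end

section
/- Let X be a Tychonoff topological space. Then the following assertions are equivalent: (i) X is a P-space; (ii) C_p(X) is separably quasi-complete; (iii) C_p(X) is sequentially complete; (iv) C_p(X) is locally complete. -/
/-!
On a P-space a countable family of continuous functions is equicontinuous: at each point the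
countably many open sets witnessing continuity there intersect in an open set. Equicontinuity
survives passing to the pointwise closed absolutely convex hull, so such hulls consist of continuous
functions. This gives completeness of closed separable sets of `C_p(X)` and, with Bourbaki's
theorem that closed absolutely convex hulls of totally bounded sets are compact in the complete
space `X → ℝ`, local completeness. A Cauchy sequence has a closed, separable, bounded closure, so
separable quasi-completeness implies sequential completeness.

Conversely, let `x₀` be a non-interior point of a countable intersection `⋂ sₙ` of open sets.
Complete regularity gives a continuous `q ≥ 0` with `q x₀ = 0` whose zero set lies in `⋂ sₙ`.
The continuous functions `eₙ = max (1 - (n + 1) q) 0` are pointwise eventually equal to the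
indicator of `{q = 0}`, which is discontinuous at `x₀`. So `eₙ - e₀` is a Cauchy sequence without
limit in `C_p(X)`, and it lies in the absolutely convex hull of the null sequence
`2ⁿ⁺¹ (eₙ₊₁ - eₙ)`.
-/

open Filter Topology Bornology Pointwise
open scoped ENNReal NNReal

noncomputable section

/-- `X` is a `P`-space: every countable intersection of open sets is open. -/
def IsPSpace (X : Type*) [TopologicalSpace X] : Prop :=
  ∀ s : ℕ → Set X, (∀ n, IsOpen (s n)) → IsOpen (⋂ n, s n)

open Set

instance Submodule.isUniformAddGroup {R M : Type*} [Ring R] [AddCommGroup M] [Module R M]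
    [UniformSpace M] [IsUniformAddGroup M] (p : Submodule R M) : IsUniformAddGroup p :=
  .comap p.subtype

theorem AbsConvex.linear_preimage {𝕜 E F : Type*} [SeminormedRing 𝕜] [PartialOrder 𝕜]
    [AddCommMonoid E] [AddCommMonoid F] [Module 𝕜 E] [Module 𝕜 F] {s : Set F}
    (hs : AbsConvex 𝕜 s) (f : E →ₗ[𝕜] F) : AbsConvex 𝕜 (f ⁻¹' s) :=
  ⟨hs.1.mulActionHom_preimage f.toMulActionHom, hs.2.linear_preimage f⟩

theorem isClosed_image_val_of_closure_subset {α : Type*} [TopologicalSpace α] {s : Set α}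
    {K : Set s} (hK : IsClosed K) (h : closure (Subtype.val '' K) ⊆ s) :
    IsClosed (Subtype.val '' K) := by
  refine closure_subset_iff_isClosed.1 fun x hx => ⟨⟨x, h hx⟩, ?_, rfl⟩
  rw [← hK.closure_eq]
  exact closure_subtype.2 hx

theorem CauchySeq.exists_tendsto_of_separablyQuasiComplete {𝕜 E : Type*} [NormedField 𝕜]
    [AddCommGroup E] [Module 𝕜 E] [UniformSpace E] [IsUniformAddGroup E] [ContinuousSMul 𝕜 E]
    (h : ∀ A : Set E, IsClosed A → TopologicalSpace.IsSeparable A → IsVonNBounded 𝕜 A →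
      IsComplete A)
    {u : ℕ → E} (hu : CauchySeq u) : ∃ x, Tendsto u atTop (𝓝 x) := by
  obtain ⟨x, -, hx⟩ := cauchySeq_tendsto_of_isComplete
    (h _ isClosed_closure (countable_range u).isSeparable.closure
      (hu.totallyBounded_range.closure.isVonNBounded 𝕜))
    (fun n => subset_closure (mem_range_self n)) hu
  exact ⟨x, hx⟩

theorem Set.Equicontinuous.closedAbsConvexHull {X E : Type*} [TopologicalSpace X]
    [NormedAddCommGroup E] [NormedSpace ℝ E] {H : Set (X → E)} (hH : H.Equicontinuous) :
    (closedAbsConvexHull ℝ H).Equicontinuous := by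
  intro x₀
  refine Metric.equicontinuousAt_iff_right.2 fun ε hε => ?_
  filter_upwards [Metric.equicontinuousAt_iff_right.1 (hH x₀) (ε / 2) (half_pos hε)] with x hx
  let L : (X → E) →ₗ[ℝ] E := (LinearMap.proj x₀ : (X → E) →ₗ[ℝ] E) - LinearMap.proj x
  have hsub : _root_.closedAbsConvexHull ℝ H ⊆ L ⁻¹' Metric.closedBall 0 (ε / 2) := by
    refine closedAbsConvexHull_min (fun f hf => ?_)
      (AbsConvex.linear_preimage ⟨balanced_closedBall_zero, convex_closedBall 0 _⟩ L)
      (Metric.isClosed_closedBall.preimage ((continuous_apply x₀).sub (continuous_apply x)))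
    simpa [L, dist_eq_norm] using (hx ⟨f, hf⟩).le
  intro f
  have hf : ‖f.1 x₀ - f.1 x‖ ≤ ε / 2 := by simpa [L] using hsub f.2
  rw [dist_eq_norm]
  exact hf.trans_lt (half_lt_self hε)

theorem sum_range_inv_two_pow_succ_smul_mem_absConvexHull {E : Type*} [AddCommGroup E]
    [Module ℝ E] (w : ℕ → E) (N : ℕ) :
    ∑ n ∈ Finset.range N, (2⁻¹ : ℝ) ^ (n + 1) • w n ∈ absConvexHull ℝ (range w) := by
  induction N generalizing w with
  | zero => exact zero_mem_absConvexHull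
  | succ N ih =>
    have hsum : ∑ n ∈ Finset.range (N + 1), (2⁻¹ : ℝ) ^ (n + 1) • w n =
        (1 / 2 : ℝ) • ∑ n ∈ Finset.range N, (2⁻¹ : ℝ) ^ (n + 1) • w (n + 1) +
          (1 / 2 : ℝ) • w 0 := by
      simp [Finset.sum_range_succ', Finset.smul_sum, pow_succ, mul_smul]
    rw [hsum]
    exact convex_absConvexHull
      (absConvexHull_mono (range_comp_subset_range (· + 1) w) (ih (fun n => w (n + 1))))
      (subset_absConvexHull (mem_range_self 0)) (by norm_num) (by norm_num) (by norm_num)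

namespace IsPSpace

variable {X : Type*} [TopologicalSpace X]

theorem isOpen_iInter {ι : Type*} [Countable ι] (hX : IsPSpace X) {s : ι → Set X}
    (hs : ∀ i, IsOpen (s i)) : IsOpen (⋂ i, s i) := by
  cases isEmpty_or_nonempty ι
  · simp
  obtain ⟨f, hf⟩ := exists_surjective_nat ι
  rw [← hf.iInter_comp]
  exact hX _ fun n => hs (f n)

theorem equicontinuous_of_countable {α : Type*} [UniformSpace α] (hX : IsPSpace X)
    {H : Set (X → α)} (hH : H.Countable) (hc : ∀ f ∈ H, Continuous f) : H.Equicontinuous := by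
  intro x₀ U hU
  have := hH.to_subtype
  have hV := interior_mem_uniformity hU
  have hopen : IsOpen (⋂ f : H, {x | ((f : X → α) x₀, (f : X → α) x) ∈ interior U}) :=
    hX.isOpen_iInter fun f => isOpen_interior.preimage (continuous_const.prodMk (hc f f.2))
  refine mem_of_superset (hopen.mem_nhds ?_) fun x hx f => interior_subset (mem_iInter.1 hx f)
  exact mem_iInter.2 fun f => refl_mem_uniformity hV

theorem closedAbsConvexHull_subset_cP (hX : IsPSpace X) {H : Set (X → ℝ)} (hH : H.Countable)
    (hc : H ⊆ cP X) : closedAbsConvexHull ℝ H ⊆ cP X := fun f hf =>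
  (hX.equicontinuous_of_countable hH hc).closedAbsConvexHull.continuous ⟨f, hf⟩

theorem isComplete_of_isSeparable (hX : IsPSpace X) {A : Set (cP X)} (hA : IsClosed A)
    (hs : TopologicalSpace.IsSeparable A) : IsComplete A := by
  obtain ⟨c, hc, hAc⟩ := hs
  have hsub : closure (Subtype.val '' A) ⊆ cP X :=
    (closure_minimal ((image_mono hAc).trans <|
      (image_closure_subset_closure_image continuous_subtype_val).trans
        closure_subset_closedAbsConvexHull) isClosed_closedAbsConvexHull).trans
      (hX.closedAbsConvexHull_subset_cP (hc.image _) (image_subset_iff.2 fun f _ => f.2))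
  rw [← isUniformEmbedding_subtype_val.isUniformInducing.isComplete_iff]
  exact (isClosed_image_val_of_closure_subset hA hsub).isComplete

theorem isCompact_closedAbsConvexHull_of_tendsto_zero (hX : IsPSpace X) {u : ℕ → cP X}
    (hu : Tendsto u atTop (𝓝 0)) : IsCompact (closedAbsConvexHull ℝ (range u)) := by
  set T := closedAbsConvexHull ℝ (range fun n => (u n : X → ℝ))
  have hT : T ⊆ cP X := hX.closedAbsConvexHull_subset_cP (countable_range _)
    (range_subset_iff.2 fun n => (u n).2)
  have hTc : IsCompact T := isCompact_closedAbsConvexHull_of_totallyBounded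
    (tendsto_subtype_rng.1 hu).cauchySeq.totallyBounded_range
  have hK : closedAbsConvexHull ℝ (range u) ⊆ Subtype.val ⁻¹' T :=
    closedAbsConvexHull_min
      (range_subset_iff.2 fun n => subset_closedAbsConvexHull (mem_range_self n))
      (absConvex_convexClosedHull.linear_preimage (cP X).subtype)
      (isClosed_closedAbsConvexHull.preimage continuous_subtype_val)
  have hclosed := isClosed_image_val_of_closure_subset isClosed_closedAbsConvexHull
    ((closure_minimal (image_subset_iff.2 hK) isClosed_closedAbsConvexHull).trans hT)
  exact Subtype.isCompact_iff.2 (hTc.of_isClosed_subset hclosed (image_subset_iff.2 hK))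

end IsPSpace

section NotPSpace

variable {X : Type*} [TopologicalSpace X] [CompletelyRegularSpace X]

theorem exists_continuous_nonneg_zeroSet_subset_iInter {s : ℕ → Set X} (hs : ∀ n, IsOpen (s n))
    {x₀ : X} (hx₀ : x₀ ∈ ⋂ n, s n) :
    ∃ q : X → ℝ, Continuous q ∧ (∀ x, 0 ≤ q x) ∧ q x₀ = 0 ∧ ∀ x, q x = 0 → x ∈ ⋂ n, s n := by
  choose f hfc hfx hfs using fun n => CompletelyRegularSpace.completely_regular x₀ (s n)ᶜ
    (hs n).isClosed_compl (by simpa using mem_iInter.1 hx₀ n)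
  have hgeo : Summable fun n : ℕ => (2⁻¹ : ℝ) ^ n :=
    summable_geometric_of_lt_one (by norm_num) (by norm_num)
  have hnonneg (n : ℕ) (x : X) : 0 ≤ (2⁻¹ : ℝ) ^ n * f n x := mul_nonneg (by positivity) (f n x).2.1
  have hbound (n : ℕ) (x : X) : ‖(2⁻¹ : ℝ) ^ n * f n x‖ ≤ (2⁻¹ : ℝ) ^ n := by
    rw [Real.norm_of_nonneg (hnonneg n x)]
    exact mul_le_of_le_one_right (by positivity) (f n x).2.2
  refine ⟨fun x => ∑' n, (2⁻¹ : ℝ) ^ n * f n x,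
    continuous_tsum (fun n => continuous_const.mul (continuous_subtype_val.comp (hfc n))) hgeo
      hbound, fun x => tsum_nonneg (hnonneg · x), by simp [hfx], fun x hx => ?_⟩
  refine mem_iInter.2 fun n => by_contra fun hxn => ?_
  have hle := (hgeo.of_norm_bounded (hbound · x)).le_tsum n fun m _ => hnonneg m x
  rw [hfs n hxn, Pi.one_apply, Set.Icc.coe_one, mul_one] at hle
  exact (pow_pos (by norm_num) n).not_ge (hle.trans_eq hx)

theorem exists_eventually_eq_not_continuous_of_not_isPSpace (h : ¬ IsPSpace X) :
    ∃ (e : ℕ → X → ℝ) (g : X → ℝ),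
      (∀ n, Continuous (e n)) ∧ (∀ x, ∀ᶠ n in atTop, e n x = g x) ∧ ¬ Continuous g := by
  simp only [IsPSpace, not_forall] at h
  obtain ⟨s, hs, hns⟩ := h
  obtain ⟨x₀, hx₀, hnhds⟩ : ∃ x₀ ∈ ⋂ n, s n, ⋂ n, s n ∉ 𝓝 x₀ := by
    simpa [isOpen_iff_mem_nhds] using hns
  obtain ⟨q, hqc, hq0, hqx₀, hqs⟩ := exists_continuous_nonneg_zeroSet_subset_iInter hs hx₀
  refine ⟨fun n x => max (1 - (n + 1) * q x) 0, fun x => if q x = 0 then 1 else 0,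
    fun n => by fun_prop, fun x => ?_, fun hg => hnhds ?_⟩
  · by_cases hx : q x = 0
    · simp [hx]
    obtain ⟨N, hN⟩ := exists_nat_gt (q x)⁻¹
    filter_upwards [eventually_ge_atTop N] with n hn
    have hqn : 1 < (n + 1) * q x := (inv_lt_iff_one_lt_mul₀ ((hq0 x).lt_of_ne' hx)).1
      (hN.trans_le (by norm_cast; omega))
    simp [hx, hqn.le]
  · have hgx₀ : (if q x₀ = 0 then 1 else 0 : ℝ) ≠ 0 := by simp [hqx₀]
    filter_upwards [hg.continuousAt.eventually_ne hgx₀] with x hx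
    exact hqs x (by_contra fun h => hx (if_neg h))

theorem exists_cauchySeq_not_tendsto_of_not_isPSpace (h : ¬ IsPSpace X) :
    ∃ w t : ℕ → cP X, Tendsto w atTop (𝓝 0) ∧ (∀ N, t N ∈ absConvexHull ℝ (range w)) ∧
      CauchySeq t ∧ ∀ f, ¬ Tendsto t atTop (𝓝 f) := by
  obtain ⟨e, g, hec, heg, hg⟩ := exists_eventually_eq_not_continuous_of_not_isPSpace h
  let ec : ℕ → cP X := fun n => ⟨e n, hec n⟩
  have hec_tendsto : Tendsto (fun n => (ec n : X → ℝ)) atTop (𝓝 g) :=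
    tendsto_pi_nhds.2 fun x => tendsto_const_nhds.congr' ((heg x).mono fun _ hn => hn.symm)
  let w : ℕ → cP X := fun n => (2 : ℝ) ^ (n + 1) • (ec (n + 1) - ec n)
  refine ⟨w, fun N => ec N - ec 0, ?_, fun N => ?_, ?_, fun f hf => hg ?_⟩
  · rw [tendsto_subtype_rng, tendsto_pi_nhds]
    refine fun x => tendsto_const_nhds.congr' ?_
    filter_upwards [heg x, (tendsto_add_atTop_nat 1).eventually (heg x)] with n hn hn1
    simp [w, ec, hn, hn1]
  · convert sum_range_inv_two_pow_succ_smul_mem_absConvexHull w N using 1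
    show ec N - ec 0 = _
    rw [← Finset.sum_range_sub ec N]
    refine Finset.sum_congr rfl fun n _ => ?_
    rw [smul_smul, ← mul_pow, inv_mul_cancel₀ two_ne_zero, one_pow, one_smul]
  · exact isUniformEmbedding_subtype_val.isUniformInducing.cauchy_map_iff.1
      (hec_tendsto.sub_const (e 0)).cauchySeq
  · have hlim : g - e 0 = f :=
      tendsto_nhds_unique (hec_tendsto.sub_const (e 0)) (tendsto_subtype_rng.1 hf)
    rw [← sub_add_cancel g (e 0), hlim]
    exact f.2.add (hec 0)

end NotPSpace

/-- For a Tychonoff space `X` the following are equivalent: (i) `X` is a `P`-space;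
(ii) `C_p(X)` is separably quasi-complete (every closed separable bounded set is complete);
(iii) `C_p(X)` is sequentially complete; (iv) `C_p(X)` is locally complete (the closed
absolutely convex hull of every null sequence is compact). -/
theorem cp_completeness_characterizations (X : Type*) [TopologicalSpace X] [T35Space X] :
    (IsPSpace X ↔
      (∀ A : Set ↥(cP X), IsClosed A → TopologicalSpace.IsSeparable A →
        IsVonNBounded ℝ A → IsComplete A)) ∧
    (IsPSpace X ↔
      (∀ u : ℕ → ↥(cP X), CauchySeq u → ∃ x, Tendsto u atTop (nhds x))) ∧
    (IsPSpace X ↔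
      (∀ u : ℕ → ↥(cP X), Tendsto u atTop (nhds 0) →
        IsCompact (closure (convexHull ℝ (balancedHull ℝ (Set.range u)))))) := by
  simp only [← absConvexHull_eq_convexHull_balancedHull,
    ← closedAbsConvexHull_eq_closure_absConvexHull]
  have hP_ii (hX : IsPSpace X) (A : Set (cP X)) (hA : IsClosed A)
      (hs : TopologicalSpace.IsSeparable A) (_ : IsVonNBounded ℝ A) : IsComplete A :=
    hX.isComplete_of_isSeparable hA hs
  have hiii_P (h : ∀ u : ℕ → cP X, CauchySeq u → ∃ x, Tendsto u atTop (𝓝 x)) : IsPSpace X := by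
    by_contra hX
    obtain ⟨-, t, -, -, ht, hnt⟩ := exists_cauchySeq_not_tendsto_of_not_isPSpace hX
    obtain ⟨f, hf⟩ := h t ht
    exact hnt f hf
  have hiv_P (h : ∀ u : ℕ → cP X, Tendsto u atTop (𝓝 0) →
      IsCompact (closedAbsConvexHull ℝ (range u))) : IsPSpace X := by
    by_contra hX
    obtain ⟨w, t, hw, htw, ht, hnt⟩ := exists_cauchySeq_not_tendsto_of_not_isPSpace hX
    obtain ⟨f, -, hf⟩ := cauchySeq_tendsto_of_isComplete (h w hw).isComplete
      (fun N => absConvexHull_subset_closedAbsConvexHull (htw N)) ht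
    exact hnt f hf
  exact ⟨⟨hP_ii, fun h => hiii_P fun _ hu => hu.exists_tendsto_of_separablyQuasiComplete h⟩,
    ⟨fun hX _ hu => hu.exists_tendsto_of_separablyQuasiComplete (hP_ii hX), hiii_P⟩,
    ⟨fun hX _ => hX.isCompact_closedAbsConvexHull_of_tendsto_zero, hiv_P⟩⟩

end
end

section
/- Let 1 ≤ p ≤ q ≤ ∞, let X be a Tychonoff space, and let E be a linear subspace of the product 𝔽^X (with the product topology, 𝔽 = ℝ or ℂ) containing C_p(X). Then every (p,q)-(V) set in the topological dual E' is contained in a finite-dimensional linear subspace of E'. -/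
open Filter Topology Bornology
open scoped ENNReal NNReal

set_option synthInstance.maxHeartbeats 1000000

noncomputable section

variable {𝕜 : Type*} [RCLike 𝕜]

/-- A `𝕜`-valued sequence belongs to `ℓ_p` when `p ≠ ∞`, and to `c₀` when `p = ∞`. -/
def InLpC0K (p : ℝ≥0∞) (f : ℕ → 𝕜) : Prop :=
  (p ≠ ∞ ∧ Memℓp f p) ∨ (p = ∞ ∧ Tendsto f atTop (nhds (0 : 𝕜)))

/-- An `ℝ≥0∞`-valued sequence belongs to `ℓ_q` (i.e. `∑ (f n) ^ q < ∞`) when `q ≠ ∞`,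
and to `c₀` when `q = ∞`. -/
def InLpC0E (q : ℝ≥0∞) (f : ℕ → ℝ≥0∞) : Prop :=
  (q ≠ ∞ ∧ (∑' n, f n ^ q.toReal) ≠ ∞) ∨ (q = ∞ ∧ Tendsto f atTop (nhds (0 : ℝ≥0∞)))

/-- A sequence `x` in a topological vector space `E` over `𝕜` is weakly `p`-summable if
`(χ (x n))ₙ ∈ ℓ_p` (resp. `∈ c₀` if `p = ∞`) for every continuous linear functional `χ` on `E`. -/
def WeaklySummableK (p : ℝ≥0∞) {E : Type*} [AddCommGroup E] [Module 𝕜 E] [TopologicalSpace E]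
    (x : ℕ → E) : Prop :=
  ∀ χ : E →L[𝕜] 𝕜, InLpC0K p fun n => χ (x n)

/-- `B ⊆ E'` is a `(p,q)`-`(V)` set: for every weakly `p`-summable sequence `(x n)` in `E`,
the sequence `(sup_{χ ∈ B} |χ (x n)|)ₙ` belongs to `ℓ_q` (to `c₀` if `q = ∞`). -/
def IsVSetK (p q : ℝ≥0∞) {E : Type*} [AddCommGroup E] [Module 𝕜 E] [TopologicalSpace E]
    (B : Set (E →L[𝕜] 𝕜)) : Prop :=
  ∀ x : ℕ → E, WeaklySummableK (𝕜 := 𝕜) p x → InLpC0E q fun n => ⨆ χ ∈ B, (‖χ (x n)‖₊ : ℝ≥0∞)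


/-!
Every continuous functional `χ` on `M ⊆ 𝕜^X` is a finite combination of point evaluations. Call
its support the set of points every neighbourhood of which carries a function of `M` on which `χ`
does not vanish; by complete regularity it contains a point outside any finite set `F` unless `χ`
is spanned by the evaluations at `F`. So if `B` lay in no such finite span, the supports of its
members would cover an infinite set; choosing infinitely many of its points with pairwise disjoint
open neighbourhoods `U k` gives `ψ k ∈ B` and `w k ∈ M` vanishing off `U k` with
`ψ k (w k) = 1`. Every continuous functional sees only finitely many `w k`, so `(w k)` is weakly
`p`-summable for every `p`, while `sup_{χ ∈ B} |χ (w k)| ≥ 1` is not even in `c₀`.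
-/

open Set Function

theorem Set.Infinite.exists_isOpen_disjoint_inter_infinite {Y : Type*} [TopologicalSpace Y]
    [T3Space Y] {A : Set Y} (hA : A.Infinite) :
    ∃ a ∈ A, ∃ U V : Set Y, IsOpen U ∧ IsOpen V ∧ a ∈ U ∧ Disjoint U V ∧ (A ∩ V).Infinite := by
  obtain ⟨x, hx, y, hy, hxy⟩ := hA.nontrivial
  obtain ⟨U₀, V₀, hU₀, hV₀, hxU₀, hyV₀, hUV₀⟩ := t2_separation hxy
  obtain ⟨C, hCx, hC, hCU₀⟩ := exists_mem_nhds_isClosed_subset (hU₀.mem_nhds hxU₀)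
  by_cases hAC : (A \ C).Infinite
  · exact ⟨x, hx, interior C, Cᶜ, isOpen_interior, hC.isOpen_compl, mem_interior_iff_mem_nhds.2 hCx,
      disjoint_compl_right.mono_left interior_subset, hAC⟩
  · have hAC' : (A ∩ C).Infinite := by
      simpa [sdiff_sdiff_right_self] using hA.sdiff (not_infinite.1 hAC)
    exact ⟨y, hy, V₀, U₀, hV₀, hU₀, hyV₀, hUV₀.symm, hAC'.mono (inter_subset_inter_right A hCU₀)⟩

theorem Set.Infinite.exists_seq_pairwise_disjoint_isOpen {Y : Type*} [TopologicalSpace Y]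
    [T3Space Y] {A : Set Y} (hA : A.Infinite) :
    ∃ (a : ℕ → Y) (U : ℕ → Set Y), (∀ n, a n ∈ A) ∧ (∀ n, IsOpen (U n)) ∧ (∀ n, a n ∈ U n) ∧
      Pairwise (Disjoint on U) := by
  let State := {W : Set Y // IsOpen W ∧ (A ∩ W).Infinite}
  have step (W : State) : ∃ a ∈ A ∩ W.1, ∃ U V : Set Y, IsOpen U ∧ IsOpen V ∧ a ∈ U ∧
      Disjoint U V ∧ (A ∩ W.1 ∩ V).Infinite :=
    W.2.2.exists_isOpen_disjoint_inter_infinite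
  choose a ha U V hU hV haU hUV hAV using step
  let next (W : State) : State := ⟨W.1 ∩ V W, W.2.1.inter (hV W), by rw [← inter_assoc]; exact hAV W⟩
  let W (n : ℕ) : State := next^[n] ⟨univ, isOpen_univ, by simpa using hA⟩
  have hW : Antitone fun n => (W n).1 := antitone_nat_of_succ_le fun n => by
    simp only [W, Function.iterate_succ_apply', next]; exact inter_subset_left
  refine ⟨fun n => a (W n), fun n => (W n).1 ∩ U (W n), fun n => (ha _).1,
    fun n => (W n).2.1.inter (hU _), fun n => ⟨(ha _).2, haU _⟩, ?_⟩
  suffices ∀ m n, m < n → Disjoint ((W m).1 ∩ U (W m)) ((W n).1 ∩ U (W n)) from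
    fun m n hmn => hmn.lt_or_gt.elim (this m n) fun h => (this n m h).symm
  intro m n hmn
  have hWn : (W n).1 ⊆ V (W m) := (hW (Nat.succ_le_of_lt hmn)).trans <| by
    simp only [W, Function.iterate_succ_apply', next]; exact inter_subset_right
  exact ((hUV _).mono inter_subset_right hWn).mono_right inter_subset_left

section EvaluationFunctionals

variable {X : Type*} (M : Submodule 𝕜 (X → 𝕜))

def evCLM (x : X) : M →L[𝕜] 𝕜 := (ContinuousLinearMap.proj x).comp M.subtypeL

@[simp] lemma evCLM_apply (x : X) (f : M) : evCLM M x f = (f : X → 𝕜) x := rfl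

variable {M}

theorem ContinuousLinearMap.coe_mem_span_image_coe_iff {R E F : Type*} [CommSemiring R]
    [TopologicalSpace E] [AddCommMonoid E] [Module R E] [TopologicalSpace F] [AddCommMonoid F]
    [Module R F] [ContinuousConstSMul R F] [ContinuousAdd F] {s : Set (E →L[R] F)}
    {f : E →L[R] F} :
    (f : E →ₗ[R] F) ∈ Submodule.span R ((↑) '' s) ↔ f ∈ Submodule.span R s :=
  Submodule.apply_mem_span_image_iff_mem_span (f := ContinuousLinearMap.coeLM R) coe_injective

theorem mem_span_evCLM_iff {S : Set X} (hS : S.Finite) {χ : M →L[𝕜] 𝕜} :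
    χ ∈ Submodule.span 𝕜 (evCLM M '' S) ↔ ∀ m : M, (∀ t ∈ S, (m : X → 𝕜) t = 0) → χ m = 0 := by
  constructor
  · intro hχ m hm
    induction hχ using Submodule.span_induction with
    | mem _ h => obtain ⟨t, ht, rfl⟩ := h; exact hm t ht
    | zero => rfl
    | add _ _ _ _ h₁ h₂ => simp [h₁, h₂]
    | smul _ _ _ h => simp [h]
  · intro h
    have := hS.to_subtype
    have hrange : (range fun t : S => (evCLM M t : M →ₗ[𝕜] 𝕜)) = (↑) '' (evCLM M '' S) := by
      rw [image_image, image_eq_range]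
    refine ContinuousLinearMap.coe_mem_span_image_coe_iff.1 <| hrange ▸
      mem_span_of_iInf_ker_le_ker fun m hm => ?_
    exact h m fun t ht => by simpa using Submodule.mem_iInf _ |>.1 hm ⟨t, ht⟩

theorem exists_finset_mem_span_evCLM (χ : M →L[𝕜] 𝕜) :
    ∃ F : Finset X, χ ∈ Submodule.span 𝕜 (evCLM M '' F) := by
  classical
  have hrange : (range fun x => (evCLM M x : M →ₗ[𝕜] 𝕜)) = (↑) '' (evCLM M '' univ) := by
    rw [image_univ, ← range_comp]; rfl
  have hχ : χ ∈ Submodule.span 𝕜 (evCLM M '' univ) := by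
    refine ContinuousLinearMap.coe_mem_span_image_coe_iff.1 <| hrange ▸
      (LinearMap.mem_span_iff_continuous _).2 ?_
    convert χ.continuous using 1
    · simp only [instTopologicalSpaceSubtype, Pi.topologicalSpace, induced_iInf, induced_compose]
      rfl
    · rfl
  obtain ⟨T, hT, hχT⟩ := Submodule.mem_span_finite_of_mem_span hχ
  obtain ⟨F, -, rfl⟩ := Finset.subset_set_image_iff.1 hT
  exact ⟨F, by simpa using hχT⟩

end EvaluationFunctionals

section Support

variable {X : Type*} [TopologicalSpace X] {M : Submodule 𝕜 (X → 𝕜)}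

def dualSupport (χ : M →L[𝕜] 𝕜) : Set X :=
  {y | ∀ U ∈ 𝓝 y, ∃ m : M, (∀ t ∉ U, (m : X → 𝕜) t = 0) ∧ χ m ≠ 0}

theorem exists_apply_eq_one_of_mem_dualSupport {χ : M →L[𝕜] 𝕜} {y : X} (hy : y ∈ dualSupport χ)
    {U : Set X} (hU : U ∈ 𝓝 y) : ∃ m : M, (∀ t ∉ U, (m : X → 𝕜) t = 0) ∧ χ m = 1 := by
  obtain ⟨m, hmU, hm⟩ := hy U hU
  exact ⟨(χ m)⁻¹ • m, fun t ht => by simp [hmU t ht], by simp [hm]⟩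

theorem exists_continuous_eq_one_eqOn_zero [CompletelyRegularSpace X] {C : Set X}
    (hC : IsClosed C) {y : X} (hy : y ∉ C) :
    ∃ f : X → 𝕜, Continuous f ∧ f y = 1 ∧ EqOn f 0 C := by
  obtain ⟨g, hg, hgy, hgC⟩ := CompletelyRegularSpace.completely_regular y C hC hy
  exact ⟨fun t => 1 - ((g t : ℝ) : 𝕜), by fun_prop, by simp [hgy], fun t ht => by simp [hgC ht]⟩

theorem exists_mem_dualSupport_notMem_of_notMem_span [T35Space X]
    (hM : ∀ f : X → 𝕜, Continuous f → f ∈ M) {χ : M →L[𝕜] 𝕜} {F : Finset X}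
    (hχ : χ ∉ Submodule.span 𝕜 (evCLM M '' F)) : ∃ y ∈ dualSupport χ, y ∉ F := by
  classical
  obtain ⟨G₀, hG₀⟩ := exists_finset_mem_span_evCLM χ
  obtain ⟨G, -, hGmin⟩ := exists_minimal_le_of_wellFoundedLT
    (fun G : Finset X => χ ∈ Submodule.span 𝕜 (evCLM M '' G)) G₀ hG₀
  obtain ⟨y, hyG, hyF⟩ : ∃ y ∈ G, y ∉ F := Finset.not_subset.1 fun hGF =>
    hχ <| Submodule.span_mono (image_mono hGF) hGmin.prop
  refine ⟨y, fun U hU => ?_, hyF⟩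
  obtain ⟨f, hf, hfy, hf0⟩ := exists_continuous_eq_one_eqOn_zero (𝕜 := 𝕜)
    (((G.erase y).finite_toSet.isClosed).union isOpen_interior.isClosed_compl)
    (by simp [mem_interior_iff_mem_nhds.2 hU] : y ∉ ↑(G.erase y) ∪ (interior U)ᶜ)
  let m : M := ⟨f, hM f hf⟩
  refine ⟨m, fun t ht => hf0 (Or.inr fun h => ht (interior_subset h)), fun hχm => ?_⟩
  -- otherwise `χ` would already be spanned by the evaluations on `G.erase y`:
  -- `n - n y • m` vanishes on `G` for every `n` vanishing on `G.erase y`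
  refine hGmin.not_prop_of_lt (Finset.erase_ssubset hyG) <|
    (mem_span_evCLM_iff (G.erase y).finite_toSet).2 fun n hn => ?_
  have hnm : χ (n - (n : X → 𝕜) y • m) = 0 := by
    refine (mem_span_evCLM_iff G.finite_toSet).1 hGmin.prop _ fun t ht => ?_
    by_cases hty : t = y
    · subst hty; simp [m, hfy]
    · have ht' : t ∈ G.erase y := Finset.mem_erase.2 ⟨hty, ht⟩
      simp [m, hn t ht', hf0 (Or.inl ht' : t ∈ ↑(G.erase y) ∪ (interior U)ᶜ)]
  simpa [hχm] using hnm

end Support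

theorem inLpC0K_of_finite_support (p : ℝ≥0∞) {f : ℕ → 𝕜} (hf : {n | f n ≠ 0}.Finite) :
    InLpC0K p f := by
  by_cases hp : p = ∞
  · refine Or.inr ⟨hp, tendsto_const_nhds.congr' ?_⟩
    rw [← Nat.cofinite_eq_atTop]
    exact eventually_cofinite.2 (by simpa [eq_comm] using hf)
  · exact Or.inl ⟨hp, (memℓp_zero hf).of_exponent_ge bot_le⟩

theorem not_inLpC0E_of_one_le (q : ℝ≥0∞) {f : ℕ → ℝ≥0∞} (hf : ∀ n, 1 ≤ f n) :
    ¬ InLpC0E q f := by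
  rintro (⟨-, hsum⟩ | ⟨-, htend⟩)
  · refine hsum (eq_top_mono (ENNReal.tsum_le_tsum fun n => ?_)
      (ENNReal.tsum_const_eq_top_of_ne_zero one_ne_zero))
    simpa using ENNReal.rpow_le_rpow (hf n) ENNReal.toReal_nonneg
  · obtain ⟨n, hn⟩ := (htend.eventually (gt_mem_nhds zero_lt_one)).exists
    exact (hf n).not_gt hn

theorem weaklySummableK_of_finite_setOf_apply_ne_zero {X : Type*} {M : Submodule 𝕜 (X → 𝕜)}
    (p : ℝ≥0∞) {w : ℕ → M} (hw : ∀ t, {k | (w k : X → 𝕜) t ≠ 0}.Finite) :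
    WeaklySummableK (𝕜 := 𝕜) p w := by
  intro χ
  obtain ⟨H, hH⟩ := exists_finset_mem_span_evCLM χ
  refine inLpC0K_of_finite_support p <| (H.finite_toSet.biUnion fun t _ => hw t).subset
    fun k hk => ?_
  by_contra hkH
  simp only [mem_iUnion, mem_ofPred_eq, not_exists, not_not] at hkH
  exact hk ((mem_span_evCLM_iff H.finite_toSet).1 hH (w k) hkH)

theorem exists_seq_apply_eq_one_of_not_subset_span {X : Type*} [TopologicalSpace X] [T35Space X]
    {M : Submodule 𝕜 (X → 𝕜)} (hM : ∀ f : X → 𝕜, Continuous f → f ∈ M) {B : Set (M →L[𝕜] 𝕜)}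
    (hB : ∀ F : Finset X, ¬ B ⊆ Submodule.span 𝕜 (evCLM M '' F)) :
    ∃ (ψ : ℕ → M →L[𝕜] 𝕜) (w : ℕ → M), (∀ k, ψ k ∈ B) ∧ (∀ k, ψ k (w k) = 1) ∧
      ∀ t, {k | (w k : X → 𝕜) t ≠ 0}.Finite := by
  have hS : (⋃ χ ∈ B, dualSupport χ).Infinite := fun hfin => by
    obtain ⟨χ, hχB, hχ⟩ := not_subset.1 (hB hfin.toFinset)
    obtain ⟨y, hy, hyF⟩ := exists_mem_dualSupport_notMem_of_notMem_span hM hχ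
    exact hyF (hfin.mem_toFinset.2 (mem_biUnion hχB hy))
  obtain ⟨a, U, haS, hUo, haU, hUdisj⟩ := hS.exists_seq_pairwise_disjoint_isOpen
  simp only [mem_iUnion] at haS
  choose ψ hψB hψ using haS
  choose w hwU hw using fun k =>
    exists_apply_eq_one_of_mem_dualSupport (hψ k) ((hUo k).mem_nhds (haU k))
  have hmemU (k : ℕ) (t : X) (hk : (w k : X → 𝕜) t ≠ 0) : t ∈ U k := by
    by_contra ht
    exact hk (hwU k t ht)
  refine ⟨ψ, w, hψB, hw, fun t => Subsingleton.finite fun k hk l hl => ?_⟩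
  by_contra hkl
  exact disjoint_left.1 (hUdisj hkl) (hmemU k t hk) (hmemU l t hl)

theorem vSet_in_dual_of_cp_is_finiteDimensional_general (p q : ℝ≥0∞)
    (X : Type*) [TopologicalSpace X] [T35Space X]
    (M : Submodule 𝕜 (X → 𝕜)) (hM : ∀ f : X → 𝕜, Continuous f → f ∈ M)
    (B : Set (↥M →L[𝕜] 𝕜)) (hB : IsVSetK p q B) :
    ∃ S : Submodule 𝕜 (↥M →L[𝕜] 𝕜), (∃ s : Finset (↥M →L[𝕜] 𝕜), S = Submodule.span 𝕜 ↑s) ∧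
      B ⊆ ↑S := by
  classical
  by_cases hfin : ∃ F : Finset X, B ⊆ Submodule.span 𝕜 (evCLM M '' F)
  · obtain ⟨F, hF⟩ := hfin
    exact ⟨_, ⟨F.image (evCLM M), by rw [Finset.coe_image]⟩, hF⟩
  obtain ⟨ψ, w, hψB, hψw, hw⟩ := exists_seq_apply_eq_one_of_not_subset_span hM (not_exists.1 hfin)
  refine absurd (hB w (weaklySummableK_of_finite_setOf_apply_ne_zero p hw))
    (not_inLpC0E_of_one_le q fun k => ?_)
  calc (1 : ℝ≥0∞) = ‖ψ k (w k)‖₊ := by simp [hψw]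
    _ ≤ ⨆ χ ∈ B, (‖χ (w k)‖₊ : ℝ≥0∞) :=
      le_iSup₂ (f := fun χ _ => (‖χ (w k)‖₊ : ℝ≥0∞)) (ψ k) (hψB k)

/-- Let `1 ≤ p ≤ q ≤ ∞`, `X` a Tychonoff space and `E` a linear subspace of `𝔽^X`
(with the product topology, `𝔽 = ℝ` or `ℂ`) containing all continuous functions
(i.e. containing `C_p(X)`). Then every `(p,q)`-`(V)` set in the topological dual `E'`
is contained in a finite-dimensional linear subspace of `E'`. -/
theorem vSet_in_dual_of_cp_is_finiteDimensional (p q : ℝ≥0∞) (hp : 1 ≤ p) (hpq : p ≤ q)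
    (X : Type*) [TopologicalSpace X] [T35Space X]
    (M : Submodule 𝕜 (X → 𝕜)) (hM : ∀ f : X → 𝕜, Continuous f → f ∈ M)
    (B : Set (↥M →L[𝕜] 𝕜)) (hB : IsVSetK p q B) :
    ∃ S : Submodule 𝕜 (↥M →L[𝕜] 𝕜), (∃ s : Finset (↥M →L[𝕜] 𝕜), S = Submodule.span 𝕜 ↑s) ∧
      B ⊆ ↑S :=
  vSet_in_dual_of_cp_is_finiteDimensional_general p q X M hM B hB

end
end

section
/- Let p ∈ [1,∞] and let T : E → L be a continuous linear operator between locally convex spaces E and L. Then the following are equivalent: (i) for every bounded subset B of E, the image T(B) is a p-(V*) set in L; (ii) the adjoint operator T* : L'_β → E'_β is p-convergent, i.e., T* maps every weakly p-summable sequence in L'_β to a sequence converging to 0 in E'_β. -/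
open Filter Topology Bornology Pointwise
open scoped ENNReal NNReal

noncomputable section

/-- A real sequence belongs to `ℓ_p` when `p ≠ ∞`, and to `c₀` when `p = ∞`. -/
def InLpC0 (p : ℝ≥0∞) (f : ℕ → ℝ) : Prop :=
  (p ≠ ∞ ∧ Memℓp f p) ∨ (p = ∞ ∧ Tendsto f atTop (nhds (0 : ℝ)))

variable {E : Type*} [AddCommGroup E] [Module ℝ E] [TopologicalSpace E]

/-- A sequence `x` in a topological vector space `E` is weakly `p`-summable if
`(χ (x n))ₙ ∈ ℓ_p` (resp. `∈ c₀` if `p = ∞`) for every continuous linear functional `χ` on `E`. -/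
def WeaklySummable (p : ℝ≥0∞) (x : ℕ → E) : Prop :=
  ∀ χ : E →L[ℝ] ℝ, InLpC0 p fun n => χ (x n)

/-- `A ⊆ E` is a `(p,q)`-`(V*)` set: for every weakly `p`-summable sequence `(χ n)` in the
strong dual `E'_β` (the default topology on `E →L[ℝ] ℝ` is the strong topology), the sequence
`(sup_{a ∈ A} |χ n a|)ₙ` belongs to `ℓ_q` (to `c₀` if `q = ∞`). -/
def IsVAstSet (p q : ℝ≥0∞) (A : Set E) : Prop :=
  ∀ χ : ℕ → (E →L[ℝ] ℝ), WeaklySummable p χ →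
    InLpC0E q fun n => ⨆ a ∈ A, (‖χ n a‖₊ : ℝ≥0∞)

/-- `B ⊆ E'` is a `(p,q)`-`(V)` set: for every weakly `p`-summable sequence `(x n)` in `E`,
the sequence `(sup_{χ ∈ B} |χ (x n)|)ₙ` belongs to `ℓ_q` (to `c₀` if `q = ∞`). -/
def IsVSet (p q : ℝ≥0∞) (B : Set (E →L[ℝ] ℝ)) : Prop :=
  ∀ x : ℕ → E, WeaklySummable p x → InLpC0E q fun n => ⨆ χ ∈ B, (‖χ (x n)‖₊ : ℝ≥0∞)

/-- The `p`-Schur property: every weakly `p`-summable sequence converges to `0`. -/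
def HasPSchur (p : ℝ≥0∞) (F : Type*) [AddCommGroup F] [Module ℝ F] [TopologicalSpace F] : Prop :=
  ∀ x : ℕ → F, WeaklySummable p x → Tendsto x atTop (nhds 0)

/-- The identity map into `F` equipped with its weak topology. -/
def toWeakSp {F : Type*} [AddCommGroup F] [Module ℝ F] [TopologicalSpace F] (x : F) :
    WeakSpace ℝ F := x

/-- A set `A ⊆ F` viewed as a subset of `F` with its weak topology. -/
def inWeak {F : Type*} [AddCommGroup F] [Module ℝ F] [TopologicalSpace F] (A : Set F) :
    Set (WeakSpace ℝ F) := toWeakSp '' A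

/-! The strong dual topology is the topology of uniform convergence on bounded sets, so
`T* χₙ → 0` in `E'_β` means `sup_{b ∈ B} |χₙ (T b)| → 0` for every bounded `B ⊆ E`; this is exactly
the `c₀` condition defining `T(B)` to be a `p`-`(V*)` set, tested on the weakly `p`-summable `(χₙ)`. -/

lemma tendsto_iSup_enorm_iff_tendstoUniformlyOn {ι α F : Type*} [SeminormedAddGroup F]
    {l : Filter ι} {s : Set α} (f : ι → α → F) :
    Tendsto (fun i => ⨆ a ∈ s, (‖f i a‖₊ : ℝ≥0∞)) l (𝓝 0) ↔ TendstoUniformlyOn f 0 l s := by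
  simp only [ENNReal.tendsto_nhds_zero, EMetric.tendstoUniformlyOn_iff, Pi.zero_apply,
    edist_zero_left]
  constructor
  · intro h ε hε
    obtain ⟨δ, hδ, hδε⟩ := exists_between hε
    filter_upwards [h δ hδ] with i hi a ha
    exact ((le_iSup₂ (f := fun a (_ : a ∈ s) => (‖f i a‖₊ : ℝ≥0∞)) a ha).trans hi).trans_lt hδε
  · intro h ε hε
    filter_upwards [h ε hε] with i hi
    exact iSup₂_le fun a ha => (hi a ha).le

lemma ContinuousLinearMap.tendsto_nhds_zero_iff_tendsto_iSup {ι 𝕜 E F : Type*}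
    [NormedField 𝕜] [AddCommGroup E] [Module 𝕜 E] [TopologicalSpace E]
    [SeminormedAddCommGroup F] [NormedSpace 𝕜 F] {l : Filter ι} (f : ι → E →L[𝕜] F) :
    Tendsto f l (𝓝 0) ↔
      ∀ B : Set E, IsVonNBounded 𝕜 B → Tendsto (fun i => ⨆ a ∈ B, (‖f i a‖₊ : ℝ≥0∞)) l (𝓝 0) := by
  simp only [tendsto_iSup_enorm_iff_tendstoUniformlyOn]
  exact UniformConvergenceCLM.tendsto_iff_tendstoUniformlyOn (RingHom.id 𝕜) F
    { B : Set E | IsVonNBounded 𝕜 B }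

lemma isVAstSet_top_iff {p : ℝ≥0∞} {A : Set E} :
    IsVAstSet p ∞ A ↔ ∀ χ : ℕ → (E →L[ℝ] ℝ), WeaklySummable p χ →
      Tendsto (fun n => ⨆ a ∈ A, (‖χ n a‖₊ : ℝ≥0∞)) atTop (𝓝 0) := by
  simp [IsVAstSet, InLpC0E]

theorem image_bounded_isVAst_iff_adjoint_p_convergent_general (p : ℝ≥0∞)
    {E : Type*} [AddCommGroup E] [Module ℝ E] [TopologicalSpace E]
    {L : Type*} [AddCommGroup L] [Module ℝ L] [TopologicalSpace L]
    (T : E →L[ℝ] L) :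
    (∀ B : Set E, IsVonNBounded ℝ B → IsVAstSet p ∞ (T '' B)) ↔
      (∀ χ : ℕ → (L →L[ℝ] ℝ), WeaklySummable p χ →
        Tendsto (fun n => (χ n).comp T) atTop (nhds (0 : E →L[ℝ] ℝ))) := by
  simp only [isVAstSet_top_iff, ContinuousLinearMap.tendsto_nhds_zero_iff_tendsto_iSup,
    iSup_image, ContinuousLinearMap.comp_apply]
  exact ⟨fun h χ hχ B hB => h B hB χ hχ, fun h B hB χ hχ => h χ hχ B hB⟩

/-- Let `p ∈ [1,∞]` and `T : E → L` a continuous linear operator between locally convex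
spaces. The following are equivalent: (i) for every bounded `B ⊆ E` the image `T(B)` is a
`p`-`(V*)` set in `L`; (ii) the adjoint `T* : L'_β → E'_β` is `p`-convergent, i.e. it maps
every weakly `p`-summable sequence of `L'_β` to a sequence converging to `0` in `E'_β`. -/
theorem image_bounded_isVAst_iff_adjoint_p_convergent (p : ℝ≥0∞) (hp : 1 ≤ p)
    {E : Type*} [AddCommGroup E] [Module ℝ E] [TopologicalSpace E]
    [IsTopologicalAddGroup E] [ContinuousSMul ℝ E] [LocallyConvexSpace ℝ E]
    {L : Type*} [AddCommGroup L] [Module ℝ L] [TopologicalSpace L]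
    [IsTopologicalAddGroup L] [ContinuousSMul ℝ L] [LocallyConvexSpace ℝ L]
    (T : E →L[ℝ] L) :
    (∀ B : Set E, IsVonNBounded ℝ B → IsVAstSet p ∞ (T '' B)) ↔
      (∀ χ : ℕ → (L →L[ℝ] ℝ), WeaklySummable p χ →
        Tendsto (fun n => (χ n).comp T) atTop (nhds (0 : E →L[ℝ] ℝ))) :=
  image_bounded_isVAst_iff_adjoint_p_convergent_general p T

end
end

section
/- Let 1 ≤ p_1 ≤ q_1 < ∞ and 1 ≤ p_2 ≤ q_2 < ∞ satisfy p_1 ≤ p_2, q_1 ≤ q_2, and 1/p_1 − 1/q_1 ≤ 1/p_2 − 1/q_2. Let E and L be locally convex spaces and let U be an absolutely convex closed subset of E. Then every U-(q_1,p_1)-summing continuous linear operator T : E → L is U-(q_2,p_2)-summing. -/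
/-! Given `x₀, …, xₙ ∈ U`, put `gᵢ = q_V(T xᵢ)`, `S = ∑ gᵢ^q₂`, `bᵢ = gᵢ^q₂ / S`, and rescale `xᵢ`
by `wᵢ = bᵢ^(1/q₁ - 1/q₂) ∈ [0, 1]`, so that `wᵢ xᵢ` stays in the balanced set `U`. This choice
makes `(∑ (wᵢ gᵢ)^q₁)^(1/q₁) = S^(1/q₂)`, so the `(q₁, p₁)` inequality for the `wᵢ xᵢ` bounds the
left side of the `(q₂, p₂)` inequality. On the right side, Hölder's inequality with
`1/s = 1/p₁ - 1/p₂ ≤ 1/q₁ - 1/q₂` gives `(∑ (wᵢ |χ xᵢ|)^p₁)^(1/p₁) ≤ (∑ |χ xᵢ|^p₂)^(1/p₂)` for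
every `χ ∈ U°`. -/

open Filter Topology Bornology
open scoped ENNReal NNReal

noncomputable section

variable {E : Type*} [AddCommGroup E] [Module ℝ E] [TopologicalSpace E]
  {L : Type*} [AddCommGroup L] [Module ℝ L] [TopologicalSpace L]

/-- `T : E → L` is `U`-`(q,p)`-summing: for every closed absolutely convex neighborhood `V`
of `0` in `L` there is `C_V > 0` such that
`(∑_{i≤n} q_V(T xᵢ)^q)^{1/q} ≤ C_V ⬝ sup_{χ ∈ U°} (∑_{i≤n} |χ xᵢ|^p)^{1/p}`
for all `n` and `x₀,…,xₙ ∈ U`, where `q_V` is the Minkowski gauge of `V` and `U°` is the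
polar of `U`. -/
def IsUqpSumming (U : Set E) (T : E →L[ℝ] L) (q p : ℝ) : Prop :=
  ∀ V : Set L, IsClosed V → Convex ℝ V → Balanced ℝ V → V ∈ nhds (0 : L) →
    ∃ C > 0, ∀ (n : ℕ) (x : Fin (n + 1) → E), (∀ i, x i ∈ U) →
      (∑ i, gauge V (T (x i)) ^ q) ^ (1 / q) ≤
        C * ⨆ χ : {χ : E →L[ℝ] ℝ // ∀ y ∈ U, |χ y| ≤ 1},
              (∑ i, |(χ : E →L[ℝ] ℝ) (x i)| ^ p) ^ (1 / p)

open Finset in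
theorem Lp_rpow_mul_le_Lq {ι : Type*} [Fintype ι] {p q α : ℝ} (hp : 0 < p) (hpq : p ≤ q)
    (hα : 1 / p - 1 / q ≤ α) {a b : ι → ℝ} (ha : ∀ i, 0 ≤ a i) (hb : ∀ i, 0 ≤ b i)
    (hb_sum : ∑ i, b i ≤ 1) :
    (∑ i, (b i ^ α * a i) ^ p) ^ (1 / p) ≤ (∑ i, a i ^ q) ^ (1 / q) := by
  have hq : 0 < q := hp.trans_le hpq
  have hb_le_one : ∀ i, b i ≤ 1 := fun i =>
    (single_le_sum (fun j _ => hb j) (mem_univ i)).trans hb_sum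
  have hα_nonneg : 0 ≤ α := (sub_nonneg.2 (one_div_le_one_div_of_le hp hpq)).trans hα
  have ha_sum : 0 ≤ ∑ i, a i ^ q := sum_nonneg fun i _ => Real.rpow_nonneg (ha i) q
  have hweighted : ∀ i, 0 ≤ b i ^ α * a i := fun i =>
    mul_nonneg (Real.rpow_nonneg (hb i) α) (ha i)
  suffices h : ∑ i, (b i ^ α * a i) ^ p ≤ (∑ i, a i ^ q) ^ (p / q) by
    calc (∑ i, (b i ^ α * a i) ^ p) ^ (1 / p)
        ≤ ((∑ i, a i ^ q) ^ (p / q)) ^ (1 / p) := by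
          gcongr; exact sum_nonneg fun i _ => Real.rpow_nonneg (hweighted i) p
      _ = (∑ i, a i ^ q) ^ (1 / q) := by
        rw [← Real.rpow_mul ha_sum]; congr 1; field_simp
  rcases hpq.eq_or_lt with rfl | hlt
  · rw [div_self hp.ne', Real.rpow_one]
    refine sum_le_sum fun i _ => Real.rpow_le_rpow (hweighted i) ?_ hp.le
    exact mul_le_of_le_one_left (ha i) (Real.rpow_le_one (hb i) (hb_le_one i) hα_nonneg)
  · -- Hölder for `1/s + 1/q = 1/p`; since `α s ≥ 1`, the weights satisfy `(b i ^ α) ^ s ≤ b i`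
    set s := (p⁻¹ - q⁻¹)⁻¹ with hs_def
    have hs : 0 < s := inv_pos.2 (sub_pos.2 (inv_strictAnti₀ hp hlt))
    have hpqs : s.HolderTriple q p := ⟨by rw [hs_def, inv_inv, sub_add_cancel], hs, hq⟩
    have hαs : 1 ≤ α * s := by
      rw [← inv_mul_cancel₀ hs.ne']
      exact mul_le_mul_of_nonneg_right (by rw [hs_def, inv_inv]; simpa using hα) hs.le
    have hweight : ∑ i, (b i ^ α) ^ s ≤ 1 := by
      refine le_trans (sum_le_sum fun i _ => ?_) hb_sum
      rw [← Real.rpow_mul (hb i)]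
      simpa using Real.rpow_le_rpow_of_exponent_ge' (hb i) (hb_le_one i) zero_le_one hαs
    calc ∑ i, (b i ^ α * a i) ^ p
        ≤ (∑ i, (b i ^ α) ^ s) ^ (p / s) * (∑ i, a i ^ q) ^ (p / q) :=
          Real.Lr_rpow_le_Lp_mul_Lq_of_nonneg univ hpqs
            (fun i _ => Real.rpow_nonneg (hb i) α) (fun i _ => ha i)
      _ ≤ 1 * (∑ i, a i ^ q) ^ (p / q) := by
          gcongr
          exact Real.rpow_le_one
            (sum_nonneg fun i _ => Real.rpow_nonneg (Real.rpow_nonneg (hb i) α) s) hweight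
            (div_pos hp hs).le
      _ = (∑ i, a i ^ q) ^ (p / q) := one_mul _

theorem rpow_div_mul_eq_rpow_mul_rpow_div {q₁ q₂ g S : ℝ} (hq₁ : q₁ ≠ 0) (hq₂ : q₂ ≠ 0)
    (hg : 0 ≤ g) (hgS : g ^ q₂ ≤ S) :
    (g ^ q₂ / S) ^ (1 / q₁ - 1 / q₂) * g = S ^ (1 / q₂) * (g ^ q₂ / S) ^ (1 / q₁) := by
  have hgq : 0 ≤ g ^ q₂ := Real.rpow_nonneg hg q₂
  have hS : 0 ≤ S := hgq.trans hgS
  have hb : 0 ≤ g ^ q₂ / S := div_nonneg hgq hS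
  have hg_eq : g = (g ^ q₂ / S) ^ (1 / q₂) * S ^ (1 / q₂) := by
    rw [← Real.mul_rpow hb hS, div_mul_cancel_of_imp fun h => le_antisymm (h ▸ hgS) hgq,
      one_div, Real.rpow_rpow_inv hg hq₂]
  calc (g ^ q₂ / S) ^ (1 / q₁ - 1 / q₂) * g
      = (g ^ q₂ / S) ^ (1 / q₁ - 1 / q₂) * ((g ^ q₂ / S) ^ (1 / q₂) * S ^ (1 / q₂)) := by
        rw [← hg_eq]
    _ = S ^ (1 / q₂) * (g ^ q₂ / S) ^ (1 / q₁) := by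
        rw [← mul_assoc, ← Real.rpow_add' hb (by simpa using hq₁), sub_add_cancel, mul_comm]

open Finset in
theorem Lq_rpow_normalized_mul_eq {ι : Type*} [Fintype ι] {q₁ q₂ : ℝ} (hq₁ : 0 < q₁)
    (hq : q₁ ≤ q₂) {g : ι → ℝ} (hg : ∀ i, 0 ≤ g i) :
    (∑ i, ((g i ^ q₂ / ∑ j, g j ^ q₂) ^ (1 / q₁ - 1 / q₂) * g i) ^ q₁) ^ (1 / q₁) =
      (∑ i, g i ^ q₂) ^ (1 / q₂) := by
  have hq₂ : 0 < q₂ := hq₁.trans_le hq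
  set S := ∑ i, g i ^ q₂
  have hS : 0 ≤ S := sum_nonneg fun i _ => Real.rpow_nonneg (hg i) q₂
  have hb : ∀ i, 0 ≤ g i ^ q₂ / S := fun i => div_nonneg (Real.rpow_nonneg (hg i) q₂) hS
  have hterm : ∀ i, ((g i ^ q₂ / S) ^ (1 / q₁ - 1 / q₂) * g i) ^ q₁ =
      (S ^ (1 / q₂)) ^ q₁ * (g i ^ q₂ / S) := fun i => by
    rw [rpow_div_mul_eq_rpow_mul_rpow_div hq₁.ne' hq₂.ne' (hg i)
        (single_le_sum (fun j _ => Real.rpow_nonneg (hg j) q₂) (mem_univ i)),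
      Real.mul_rpow (Real.rpow_nonneg hS _) (Real.rpow_nonneg (hb i) _), one_div q₁,
      Real.rpow_inv_rpow (hb i) hq₁.ne']
  rw [sum_congr rfl fun i _ => hterm i, ← mul_sum, ← sum_div,
    Real.mul_rpow (Real.rpow_nonneg (Real.rpow_nonneg hS _) _) (div_nonneg hS hS),
    one_div q₁, Real.rpow_rpow_inv (Real.rpow_nonneg hS _) hq₁.ne']
  rcases hS.eq_or_lt with hS0 | hSpos
  · rw [← hS0, Real.zero_rpow (by positivity), zero_mul]
  · rw [div_self hSpos.ne', Real.one_rpow, mul_one]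

open Finset in
theorem bddAbove_range_polar_Lp (U : Set E) {ι : Type*} [Fintype ι] {x : ι → E}
    (hx : ∀ i, x i ∈ U) {p : ℝ} (hp : 0 ≤ p) :
    BddAbove (Set.range fun χ : {χ : E →L[ℝ] ℝ // ∀ y ∈ U, |χ y| ≤ 1} =>
      (∑ i, |(χ : E →L[ℝ] ℝ) (x i)| ^ p) ^ (1 / p)) := by
  refine ⟨(Fintype.card ι : ℝ) ^ (1 / p), ?_⟩
  rintro _ ⟨χ, rfl⟩
  have hle : ∑ i, |(χ : E →L[ℝ] ℝ) (x i)| ^ p ≤ ∑ _i : ι, (1 : ℝ) :=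
    sum_le_sum fun i _ => Real.rpow_le_one (abs_nonneg _) (χ.2 _ (hx i)) hp
  simp only [sum_const, card_univ, nsmul_eq_mul, mul_one] at hle
  exact Real.rpow_le_rpow (sum_nonneg fun i _ => by positivity) hle (by positivity)

theorem uSumming_inclusion_general (p₁ q₁ p₂ q₂ : ℝ)
    (hp₁ : 1 ≤ p₁) (hpq₁ : p₁ ≤ q₁)
    (hpp : p₁ ≤ p₂) (hqq : q₁ ≤ q₂) (hdiff : 1 / p₁ - 1 / q₁ ≤ 1 / p₂ - 1 / q₂)
    (U : Set E) (hUbal : Balanced ℝ U)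
    (T : E →L[ℝ] L) (hT : IsUqpSumming U T q₁ p₁) :
    IsUqpSumming U T q₂ p₂ := by
  have hp₁_pos : 0 < p₁ := zero_lt_one.trans_le hp₁
  have hq₁_pos : 0 < q₁ := hp₁_pos.trans_le hpq₁
  intro V hVcl hVconv hVbal hV0
  obtain ⟨C, hC, hT⟩ := hT V hVcl hVconv hVbal hV0
  refine ⟨C, hC, fun n x hx => ?_⟩
  set g : Fin (n + 1) → ℝ := fun i => gauge V (T (x i))
  have hg : ∀ i, 0 ≤ g i := fun i => gauge_nonneg _
  set S := ∑ i, g i ^ q₂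
  have hS : 0 ≤ S := Finset.sum_nonneg fun i _ => Real.rpow_nonneg (hg i) q₂
  set b : Fin (n + 1) → ℝ := fun i => g i ^ q₂ / S
  have hb : ∀ i, 0 ≤ b i := fun i => div_nonneg (Real.rpow_nonneg (hg i) q₂) hS
  have hb_sum : ∑ i, b i ≤ 1 := by rw [← Finset.sum_div]; exact div_self_le_one S
  set w : Fin (n + 1) → ℝ := fun i => b i ^ (1 / q₁ - 1 / q₂)
  have hw : ∀ i, 0 ≤ w i := fun i => Real.rpow_nonneg (hb i) _
  have hwx : ∀ i, w i • x i ∈ U := fun i => by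
    refine hUbal.smul_mem ?_ (hx i)
    rw [Real.norm_of_nonneg (hw i)]
    exact Real.rpow_le_one (hb i) ((Finset.single_le_sum (fun j _ => hb j)
      (Finset.mem_univ i)).trans hb_sum) (sub_nonneg.2 (one_div_le_one_div_of_le hq₁_pos hqq))
  calc S ^ (1 / q₂) = (∑ i, gauge V (T (w i • x i)) ^ q₁) ^ (1 / q₁) := by
        simp only [map_smul, gauge_smul_of_nonneg (hw _), smul_eq_mul]
        exact (Lq_rpow_normalized_mul_eq hq₁_pos hqq hg).symm
    _ ≤ C * ⨆ χ : {χ : E →L[ℝ] ℝ // ∀ y ∈ U, |χ y| ≤ 1},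
          (∑ i, |(χ : E →L[ℝ] ℝ) (w i • x i)| ^ p₁) ^ (1 / p₁) := hT n _ hwx
    _ ≤ C * ⨆ χ : {χ : E →L[ℝ] ℝ // ∀ y ∈ U, |χ y| ≤ 1},
          (∑ i, |(χ : E →L[ℝ] ℝ) (x i)| ^ p₂) ^ (1 / p₂) := by
        refine mul_le_mul_of_nonneg_left (ciSup_mono (bddAbove_range_polar_Lp U hx
          (hp₁_pos.le.trans hpp)) fun χ => ?_) hC.le
        simp only [map_smul, smul_eq_mul, abs_mul, abs_of_nonneg (hw _)]
        exact Lp_rpow_mul_le_Lq hp₁_pos hpp (by linarith) (fun i => abs_nonneg _) hb hb_sum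

/-- Inclusion property: if `1 ≤ p₁ ≤ q₁ < ∞` and `1 ≤ p₂ ≤ q₂ < ∞` satisfy `p₁ ≤ p₂`,
`q₁ ≤ q₂` and `1/p₁ − 1/q₁ ≤ 1/p₂ − 1/q₂`, and `U` is an absolutely convex closed subset of a
locally convex space `E`, then every `U`-`(q₁,p₁)`-summing continuous linear operator
`T : E → L` into a locally convex space `L` is `U`-`(q₂,p₂)`-summing. -/
theorem uSumming_inclusion (p₁ q₁ p₂ q₂ : ℝ)
    (hp₁ : 1 ≤ p₁) (hpq₁ : p₁ ≤ q₁) (hp₂ : 1 ≤ p₂) (hpq₂ : p₂ ≤ q₂)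
    (hpp : p₁ ≤ p₂) (hqq : q₁ ≤ q₂) (hdiff : 1 / p₁ - 1 / q₁ ≤ 1 / p₂ - 1 / q₂)
    [IsTopologicalAddGroup E] [ContinuousSMul ℝ E] [LocallyConvexSpace ℝ E]
    [IsTopologicalAddGroup L] [ContinuousSMul ℝ L] [LocallyConvexSpace ℝ L]
    (U : Set E) (hUcl : IsClosed U) (hUconv : Convex ℝ U) (hUbal : Balanced ℝ U)
    (T : E →L[ℝ] L) (hT : IsUqpSumming U T q₁ p₁) :
    IsUqpSumming U T q₂ p₂ :=
  uSumming_inclusion_general p₁ q₁ p₂ q₂ hp₁ hpq₁ hpp hqq hdiff U hUbal T hT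

end
end

section
/- Let E be a barrelled locally convex space. Then a bounded subset A of E is a (V*) set if and only if T(A) is relatively norm-compact in ℓ_1 for every continuous linear operator T : E → ℓ_1. -/
open Filter Topology Bornology Pointwise
open scoped ENNReal NNReal

noncomputable section

variable {E : Type*} [AddCommGroup E] [Module ℝ E] [TopologicalSpace E]

/-!
A bounded subset of `ℓ¹` is relatively compact iff its tails are uniformly small.

If `A` is a (V*) set but the tails of `T(A)` are not uniformly small, a gliding hump gives
points of `A` whose images carry mass `≥ ε/2` on pairwise disjoint blocks of coordinates. The
sign functionals of these blocks are weakly `1`-summable in `(ℓ¹)'`, because every signed sum of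
them has norm `≤ 1`; so their transposes are weakly `1`-summable in `E'_β`, yet do not tend to
`0` uniformly on `A`.

Conversely, a weakly `1`-summable sequence `(χₙ)` in `E'_β` defines `x ↦ (χₙ x)ₙ : E → ℓ¹`. It
is the pointwise limit of its partial sums, hence continuous by Banach–Steinhaus since `E` is
barrelled. Uniformly small tails of `T(A)` then bound `sup_{a ∈ A} |χₙ a|` for large `n`.
-/

open Function
open scoped lp

lemma Metric.totallyBounded_of_forall_exists_dist_le {X : Type*} [PseudoMetricSpace X]
    {s : Set X} (h : ∀ ε > 0, ∃ t : Set X, TotallyBounded t ∧ ∀ x ∈ s, ∃ y ∈ t, dist x y ≤ ε) :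
    TotallyBounded s := by
  refine Metric.totallyBounded_iff.2 fun ε hε => ?_
  obtain ⟨t, ht, hst⟩ := h (ε / 2) (half_pos hε)
  obtain ⟨u, hu, htu⟩ := Metric.totallyBounded_iff.1 ht (ε / 2) (half_pos hε)
  refine ⟨u, hu, fun x hx => ?_⟩
  obtain ⟨y, hy, hxy⟩ := hst x hx
  obtain ⟨z, hz, hyz⟩ := Set.mem_iUnion₂.1 (htu hy)
  refine Set.mem_iUnion₂.2 ⟨z, hz, ?_⟩
  rw [Metric.mem_ball] at hyz ⊢
  linarith [dist_triangle x y z]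

lemma isCompact_closure_iff_totallyBounded {X : Type*} [UniformSpace X] [CompleteSpace X]
    {s : Set X} : IsCompact (closure s) ↔ TotallyBounded s :=
  ⟨fun h => h.totallyBounded.subset subset_closure,
    fun h => h.closure.isCompact_of_isClosed isClosed_closure⟩

lemma abs_sign_le_one (x : ℝ) : |(SignType.sign x : ℝ)| ≤ 1 := by
  cases SignType.sign x <;> simp

section WeaklySummable

variable {F : Type*} [AddCommGroup F] [Module ℝ F] [TopologicalSpace F]

lemma inLpC0_one_iff {f : ℕ → ℝ} : InLpC0 1 f ↔ Summable fun n => |f n| := by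
  simp [InLpC0, memℓp_gen_iff (p := 1) (by simp)]

lemma WeaklySummable.map {p : ℝ≥0∞} {x : ℕ → E} (hx : WeaklySummable p x) (L : E →L[ℝ] F) :
    WeaklySummable p fun n => L (x n) :=
  fun χ => hx (χ.comp L)

lemma weaklySummable_one_of_norm_sum_smul_le {G : Type*} [NormedAddCommGroup G] [NormedSpace ℝ G]
    {x : ℕ → G} {C : ℝ}
    (hC : ∀ (J : Finset ℕ) (c : ℕ → ℝ), (∀ j, |c j| ≤ 1) → ‖∑ j ∈ J, c j • x j‖ ≤ C) :
    WeaklySummable 1 x := by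
  intro χ
  rw [inLpC0_one_iff]
  refine summable_of_sum_le (c := ‖χ‖ * C) (fun _ => abs_nonneg _) fun J => ?_
  calc ∑ j ∈ J, |χ (x j)| = χ (∑ j ∈ J, (SignType.sign (χ (x j)) : ℝ) • x j) := by
        simp [map_sum, sign_mul_self]
    _ ≤ ‖χ‖ * ‖∑ j ∈ J, (SignType.sign (χ (x j)) : ℝ) • x j‖ :=
        (le_abs_self _).trans (χ.le_opNorm _)
    _ ≤ ‖χ‖ * C := by
        gcongr
        exact hC J _ fun j => abs_sign_le_one _

def evalStrongDual [ContinuousSMul ℝ E] (x : E) : (E →L[ℝ] ℝ) →L[ℝ] ℝ where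
  toFun χ := χ x
  map_add' _ _ := rfl
  map_smul' _ _ := rfl
  cont := continuous_eval_const x

lemma WeaklySummable.summable_abs_apply [ContinuousSMul ℝ E] {χ : ℕ → E →L[ℝ] ℝ}
    (hχ : WeaklySummable 1 χ) (x : E) : Summable fun n => |χ n x| :=
  inLpC0_one_iff.1 (hχ (evalStrongDual x))

end WeaklySummable

namespace lp

lemma sum_norm_le_norm (f : ℓ¹(ℕ, ℝ)) (s : Finset ℕ) : ∑ i ∈ s, ‖f i‖ ≤ ‖f‖ := by
  simpa using lp.sum_rpow_le_norm_rpow (p := 1) (by simp) f s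

def truncate (N : ℕ) : ℓ¹(ℕ, ℝ) →L[ℝ] ℓ¹(ℕ, ℝ) :=
  ∑ i ∈ Finset.range N,
    (lp.singleContinuousLinearMap ℝ (fun _ => ℝ) 1 i).comp (lp.evalCLM ℝ (fun _ => ℝ) 1 i)

lemma truncate_apply (N : ℕ) (f : ℓ¹(ℕ, ℝ)) :
    truncate N f = ∑ i ∈ Finset.range N, lp.single 1 i (f i) := by
  simp [truncate, lp.evalCLM]

lemma isCompactOperator_truncate (N : ℕ) : IsCompactOperator (truncate N) :=
  Submodule.sum_mem (compactOperator (RingHom.id ℝ) ℓ¹(ℕ, ℝ) ℓ¹(ℕ, ℝ)) fun i _ =>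
    (isCompactOperator_of_locallyCompactSpace_dom (lp.evalCLM ℝ (fun _ => ℝ) 1 i)).clm_comp
      (lp.singleContinuousLinearMap ℝ (fun _ => ℝ) 1 i)

def tail (N : ℕ) (f : ℓ¹(ℕ, ℝ)) : ℝ := ‖f - truncate N f‖

lemma tail_eq (N : ℕ) (f : ℓ¹(ℕ, ℝ)) : tail N f = ‖f‖ - ∑ i ∈ Finset.range N, ‖f i‖ := by
  simpa [tail, truncate_apply] using lp.norm_compl_sum_single (p := 1) (by simp) f (Finset.range N)

lemma tail_le_norm (N : ℕ) (f : ℓ¹(ℕ, ℝ)) : tail N f ≤ ‖f‖ := by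
  rw [tail_eq]
  linarith [Finset.sum_nonneg fun i (_ : i ∈ Finset.range N) => norm_nonneg (f i)]

lemma tail_le_tail_add_norm_sub (N : ℕ) (f g : ℓ¹(ℕ, ℝ)) : tail N f ≤ tail N g + ‖f - g‖ := by
  have hfg : f - truncate N f = (g - truncate N g) + ((f - g) - truncate N (f - g)) := by
    rw [map_sub]; abel
  calc tail N f ≤ tail N g + tail N (f - g) := by rw [tail, hfg]; exact norm_add_le _ _
    _ ≤ tail N g + ‖f - g‖ := by gcongr; exact tail_le_norm N _

lemma norm_apply_le_tail {N n : ℕ} (hn : N ≤ n) (f : ℓ¹(ℕ, ℝ)) : ‖f n‖ ≤ tail N f := by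
  have : (f - truncate N f) n = f n := by
    rw [lp.coeFn_sub, Pi.sub_apply, truncate_apply, lp.coeFn_sum, Finset.sum_apply]
    simp [lp.single_apply, hn.not_gt]
  calc ‖f n‖ = ‖(f - truncate N f) n‖ := by rw [this]
    _ ≤ tail N f := lp.norm_apply_le_norm one_ne_zero _ n

lemma tendsto_tail (f : ℓ¹(ℕ, ℝ)) : Tendsto (fun N => tail N f) atTop (𝓝 0) := by
  simpa only [tail, truncate_apply, norm_sub_rev] using
    tendsto_iff_norm_sub_tendsto_zero.1 (lp.hasSum_single ENNReal.one_ne_top f).tendsto_sum_nat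

lemma tail_sub_tail {N N' : ℕ} (h : N ≤ N') (f : ℓ¹(ℕ, ℝ)) :
    tail N f - tail N' f = ∑ k ∈ Finset.Ico N N', ‖f k‖ := by
  rw [tail_eq, tail_eq, Finset.sum_Ico_eq_sub _ h]
  ring

theorem totallyBounded_iff_isBounded_and_tail_le {K : Set ℓ¹(ℕ, ℝ)} :
    TotallyBounded K ↔ IsBounded K ∧ ∀ ε > 0, ∃ N, ∀ f ∈ K, tail N f ≤ ε := by
  refine ⟨fun hK => ⟨hK.isBounded, fun ε hε => ?_⟩, fun ⟨hK, htail⟩ => ?_⟩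
  · obtain ⟨t, ht, hKt⟩ := Metric.totallyBounded_iff.1 hK (ε / 2) (half_pos hε)
    have : ∀ᶠ N in atTop, ∀ g ∈ t, tail N g ≤ ε / 2 :=
      (ht.eventually_all).2 fun g _ => (tendsto_tail g).eventually_le_const (half_pos hε)
    obtain ⟨N, hN⟩ := this.exists
    refine ⟨N, fun f hf => ?_⟩
    obtain ⟨g, hg, hfg⟩ := Set.mem_iUnion₂.1 (hKt hf)
    rw [Metric.mem_ball, dist_eq_norm] at hfg
    linarith [tail_le_tail_add_norm_sub N f g, hN g hg]
  · refine Metric.totallyBounded_of_forall_exists_dist_le fun ε hε => ?_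
    obtain ⟨N, hN⟩ := htail ε hε
    refine ⟨truncate N '' K,
      ((isCompactOperator_truncate N).isCompact_closure_image_of_bounded hK).totallyBounded.subset
        subset_closure, fun f hf => ⟨truncate N f, ⟨f, hf, rfl⟩, ?_⟩⟩
    rw [dist_eq_norm]
    exact hN f hf

lemma exists_strictMono_blocks {K : Set ℓ¹(ℕ, ℝ)} {ε : ℝ} (hε : 0 < ε)
    (hK : ∀ N, ∃ f ∈ K, ε < tail N f) :
    ∃ (f : ℕ → ℓ¹(ℕ, ℝ)) (N : ℕ → ℕ), StrictMono N ∧ (∀ j, f j ∈ K) ∧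
      ∀ j, ε / 2 ≤ ∑ k ∈ Finset.Ico (N j) (N (j + 1)), ‖f j k‖ := by
  choose g hgK hg using hK
  have : ∀ N, ∃ M, N < M ∧ tail M (g N) ≤ ε / 2 := fun N =>
    (((tendsto_tail (g N)).eventually_le_const (half_pos hε)).and
      (eventually_gt_atTop N)).exists.imp fun _ h => h.symm
  choose m hm_gt hm_tail using this
  set N : ℕ → ℕ := fun j => m^[j] 0
  have hN : ∀ j, N (j + 1) = m (N j) := fun j => iterate_succ_apply' m j 0
  refine ⟨fun j => g (N j), N, strictMono_nat_of_lt_succ fun j => hN j ▸ hm_gt _,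
    fun j => hgK _, fun j => ?_⟩
  rw [← tail_sub_tail (hN j ▸ (hm_gt _).le), hN]
  linarith [hg (N j), hm_tail (N j)]

def signBlock (f : ℓ¹(ℕ, ℝ)) (S : Finset ℕ) : ℓ¹(ℕ, ℝ) →L[ℝ] ℝ :=
  ∑ k ∈ S, (SignType.sign (f k) : ℝ) • lp.evalCLM ℝ (fun _ => ℝ) 1 k

lemma signBlock_apply (f : ℓ¹(ℕ, ℝ)) (S : Finset ℕ) (g : ℓ¹(ℕ, ℝ)) :
    signBlock f S g = ∑ k ∈ S, SignType.sign (f k) * g k := by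
  simp [signBlock, lp.evalCLM]

lemma signBlock_apply_self (f : ℓ¹(ℕ, ℝ)) (S : Finset ℕ) :
    signBlock f S f = ∑ k ∈ S, ‖f k‖ := by
  simp [signBlock_apply, sign_mul_self]

lemma norm_sum_smul_signBlock_le {f : ℕ → ℓ¹(ℕ, ℝ)} {S : ℕ → Finset ℕ}
    (hS : Pairwise (Disjoint on S)) (J : Finset ℕ) {c : ℕ → ℝ} (hc : ∀ j, |c j| ≤ 1) :
    ‖∑ j ∈ J, c j • signBlock (f j) (S j)‖ ≤ 1 := by
  refine ContinuousLinearMap.opNorm_le_bound _ zero_le_one fun g => ?_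
  calc ‖(∑ j ∈ J, c j • signBlock (f j) (S j)) g‖
      ≤ ∑ j ∈ J, |c j| * ∑ k ∈ S j, |SignType.sign (f j k) * g k| := by
        simp only [_root_.sum_apply, FunLike.coe_smul, Pi.smul_apply, signBlock_apply,
          smul_eq_mul]
        refine (norm_sum_le _ _).trans (Finset.sum_le_sum fun j _ => ?_)
        rw [norm_mul]
        exact mul_le_mul_of_nonneg_left (Finset.abs_sum_le_sum_abs _ _) (abs_nonneg _)
    _ ≤ ∑ j ∈ J, ∑ k ∈ S j, ‖g k‖ := by
        refine Finset.sum_le_sum fun j _ => ?_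
        calc |c j| * ∑ k ∈ S j, |SignType.sign (f j k) * g k|
            ≤ ∑ k ∈ S j, |SignType.sign (f j k) * g k| :=
              mul_le_of_le_one_left (Finset.sum_nonneg fun _ _ => abs_nonneg _) (hc j)
          _ ≤ ∑ k ∈ S j, ‖g k‖ := Finset.sum_le_sum fun k _ => by
              rw [abs_mul]
              exact mul_le_of_le_one_left (abs_nonneg _) (abs_sign_le_one _)
    _ = ∑ k ∈ J.biUnion S, ‖g k‖ := (Finset.sum_biUnion (hS.set_pairwise _)).symm
    _ ≤ 1 * ‖g‖ := (one_mul ‖g‖).symm ▸ sum_norm_le_norm g _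

lemma weaklySummable_signBlock {f : ℕ → ℓ¹(ℕ, ℝ)} {S : ℕ → Finset ℕ}
    (hS : Pairwise (Disjoint on S)) : WeaklySummable 1 fun j => signBlock (f j) (S j) :=
  weaklySummable_one_of_norm_sum_smul_le fun J _ hc => norm_sum_smul_signBlock_le hS J hc

end lp

lemma IsVAstSet.exists_tail_le {A : Set E} (hA : IsVAstSet 1 ∞ A) (T : E →L[ℝ] ℓ¹(ℕ, ℝ))
    {ε : ℝ} (hε : 0 < ε) : ∃ N, ∀ a ∈ A, lp.tail N (T a) ≤ ε := by
  by_contra! h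
  obtain ⟨f, N, hN, hfA, hf⟩ := lp.exists_strictMono_blocks (K := T '' A) hε
    fun n => by obtain ⟨a, ha, hlt⟩ := h n; exact ⟨T a, ⟨a, ha, rfl⟩, hlt⟩
  choose a haA hTa using hfA
  set u := fun j => lp.signBlock (f j) (Finset.Ico (N j) (N (j + 1)))
  have hblocks : Pairwise (Disjoint on fun j => Finset.Ico (N j) (N (j + 1))) :=
    (hN.monotone.pairwise_disjoint_on_Ico_succ).mono fun i j h => by
      simpa [← Finset.disjoint_coe] using h
  have hu := (lp.weaklySummable_signBlock (f := f) hblocks).map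
    (ContinuousLinearMap.precomp ℝ T)
  rcases hA _ hu with ⟨hne, -⟩ | ⟨-, htends⟩
  · exact hne rfl
  have hlow : ∀ j, ENNReal.ofReal (ε / 2) ≤ ⨆ x ∈ A, (‖(u j).comp T x‖₊ : ℝ≥0∞) := fun j =>
    calc ENNReal.ofReal (ε / 2) ≤ ‖(u j).comp T (a j)‖₊ := by
          rw [← ENNReal.ofReal_coe_nnreal, coe_nnnorm]
          refine ENNReal.ofReal_le_ofReal ((hf j).trans ?_)
          simp [u, hTa, lp.signBlock_apply_self, le_abs_self]
      _ ≤ ⨆ x ∈ A, (‖(u j).comp T x‖₊ : ℝ≥0∞) :=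
          le_iSup₂ (f := fun x _ => (‖(u j).comp T x‖₊ : ℝ≥0∞)) (a j) (haA j)
  exact (ENNReal.ofReal_pos.2 (half_pos hε)).not_ge (ge_of_tendsto' htends hlow)

section Barrelled

variable [IsTopologicalAddGroup E]

lemma BarrelledSpace.of_barrel_mem_nhds [ContinuousConstSMul ℝ E]
    (h : ∀ B : Set E, IsClosed B → Convex ℝ B → Balanced ℝ B → Absorbent ℝ B → B ∈ 𝓝 0) :
    BarrelledSpace ℝ E where
  continuous_of_lowerSemicontinuous p hp := Seminorm.continuous' (r := 1) <|
    h _ (p.closedBall_zero_eq ▸ hp.isClosed_preimage 1) (p.convex_closedBall 0 1)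
      (p.balanced_closedBall_zero 1) (p.absorbent_closedBall_zero one_pos)

lemma WeaklySummable.exists_clm_l1 [ContinuousSMul ℝ E] [BarrelledSpace ℝ E] {χ : ℕ → E →L[ℝ] ℝ}
    (hχ : WeaklySummable 1 χ) : ∃ T : E →L[ℝ] ℓ¹(ℕ, ℝ), ∀ x n, T x n = χ n x := by
  -- Banach–Steinhaus is stated for uniform groups; use the canonical uniformity of `E`.
  let := IsTopologicalAddGroup.rightUniformSpace E
  have := isUniformAddGroup_of_addCommGroup (G := E)
  let Tx : E → ℓ¹(ℕ, ℝ) := fun x =>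
    ⟨fun n => χ n x, (memℓp_gen_iff (p := 1) (by simp)).2 (by simpa using hχ.summable_abs_apply x)⟩
  have hT : Tendsto (fun N x => ∑ n ∈ Finset.range N, lp.single 1 n (χ n x)) atTop (𝓝 Tx) :=
    tendsto_pi_nhds.2 fun x => (lp.hasSum_single ENNReal.one_ne_top (Tx x)).tendsto_sum_nat
  exact ⟨continuousLinearMapOfTendsto (fun N => ∑ n ∈ Finset.range N,
    (lp.singleContinuousLinearMap ℝ (fun _ => ℝ) 1 n).comp (χ n)) (by simpa using hT),
    fun _ _ => rfl⟩

end Barrelled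

lemma IsVAstSet.isCompact_closure_image {A : Set E} (hV : IsVAstSet 1 ∞ A)
    (hA : IsVonNBounded ℝ A) (T : E →L[ℝ] ℓ¹(ℕ, ℝ)) : IsCompact (closure (T '' A)) := by
  refine isCompact_closure_iff_totallyBounded.2 <|
    lp.totallyBounded_iff_isBounded_and_tail_le.2 ⟨?_, fun ε hε => ?_⟩
  · exact (NormedSpace.isVonNBounded_iff ℝ).1 (hA.image T)
  · obtain ⟨N, hN⟩ := hV.exists_tail_le T hε
    exact ⟨N, Set.forall_mem_image.2 hN⟩

lemma isVAstSet_of_forall_isCompact_closure_image [IsTopologicalAddGroup E] [ContinuousSMul ℝ E]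
    [BarrelledSpace ℝ E] {A : Set E}
    (hcompact : ∀ T : E →L[ℝ] ℓ¹(ℕ, ℝ), IsCompact (closure (T '' A))) : IsVAstSet 1 ∞ A := by
  intro χ hχ
  obtain ⟨T, hT⟩ := hχ.exists_clm_l1
  have htail := (lp.totallyBounded_iff_isBounded_and_tail_le.1
    (isCompact_closure_iff_totallyBounded.1 (hcompact T))).2
  refine Or.inr ⟨rfl, ENNReal.tendsto_atTop_zero.2 fun ε hε => ?_⟩
  obtain ⟨δ, hδ, hδε⟩ := ENNReal.lt_iff_exists_nnreal_btwn.1 hε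
  obtain ⟨N, hN⟩ := htail δ (by exact_mod_cast hδ)
  refine ⟨N, fun n hn => (iSup₂_le fun a ha => ?_).trans hδε.le⟩
  have : ‖χ n a‖ ≤ δ := hT a n ▸ (lp.norm_apply_le_tail hn (T a)).trans (hN _ ⟨a, ha, rfl⟩)
  exact_mod_cast this

theorem vAstSet_iff_image_compact_in_l1_general
    {E : Type*} [AddCommGroup E] [Module ℝ E] [TopologicalSpace E]
    [IsTopologicalAddGroup E] [ContinuousSMul ℝ E]
    (hbarrelled : ∀ B : Set E, IsClosed B → Convex ℝ B → Balanced ℝ B →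
      Absorbent ℝ B → B ∈ nhds (0 : E))
    (A : Set E) (hA : IsVonNBounded ℝ A) :
    IsVAstSet 1 ∞ A ↔
      ∀ T : E →L[ℝ] lp (fun _ : ℕ => ℝ) 1, IsCompact (closure (T '' A)) :=
  have := BarrelledSpace.of_barrel_mem_nhds hbarrelled
  ⟨fun hV T => hV.isCompact_closure_image hA T, isVAstSet_of_forall_isCompact_closure_image⟩

/-- Let `E` be a barrelled locally convex space (every barrel, i.e. every closed absolutely
convex absorbing set, is a neighborhood of `0`). A bounded subset `A` of `E` is a `(V*)` set
(i.e. a `(1,∞)`-`(V*)` set) iff `T(A)` is relatively norm-compact in `ℓ₁` for every continuous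
linear operator `T : E → ℓ₁`. -/
theorem vAstSet_iff_image_compact_in_l1
    {E : Type*} [AddCommGroup E] [Module ℝ E] [TopologicalSpace E]
    [IsTopologicalAddGroup E] [ContinuousSMul ℝ E] [LocallyConvexSpace ℝ E]
    (hbarrelled : ∀ B : Set E, IsClosed B → Convex ℝ B → Balanced ℝ B →
      Absorbent ℝ B → B ∈ nhds (0 : E))
    (A : Set E) (hA : IsVonNBounded ℝ A) :
    IsVAstSet 1 ∞ A ↔
      ∀ T : E →L[ℝ] lp (fun _ : ℕ => ℝ) 1, IsCompact (closure (T '' A)) :=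
  vAstSet_iff_image_compact_in_l1_general hbarrelled A hA

end
end

section
/- Let E and L be locally convex spaces and let T : E → L be a continuous, surjective linear operator. Then the adjoint operator T* : L'_β → E'_β is a topological embedding (a homeomorphism onto its image) if and only if T is almost bounded-covering, i.e., for every bounded subset A of L there exists a bounded subset B of E such that A is contained in the closure of T(B) in L. -/
open Filter Topology Bornology Pointwise
open scoped ENNReal NNReal

noncomputable section

variable {E : Type*} [AddCommGroup E] [Module ℝ E] [TopologicalSpace E]

/-!
The adjoint `T* = (· ∘ T)` is a continuous additive map, injective because `T` is onto, so it is
an embedding iff every neighbourhood of `0` in `L'_β` contains the preimage under `T*` of one in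
`E'_β`. The polars `B°` of bounded sets form a basis at `0` in a strong dual, and
`(T*)⁻¹(B°) = (T B)°`, so the condition reads: for every bounded `A` there is a bounded `B` with
`(T B)° ⊆ A°`. By the bipolar theorem this says that `A` lies in the closed absolutely convex hull
of `T B`, i.e. in the closure of `T` of the absolutely convex hull of `B`, which is again bounded.
-/

open Set StrongDual

section TopologicalVectorSpace

variable {𝕜 E F : Type*} [NontriviallyNormedField 𝕜]
  [AddCommGroup E] [Module 𝕜 E] [TopologicalSpace E]
  [AddCommGroup F] [Module 𝕜 F] [TopologicalSpace F]

theorem Bornology.IsVonNBounded.smul [ContinuousSMul 𝕜 E] {s : Set E}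
    (hs : IsVonNBounded 𝕜 s) (c : 𝕜) : IsVonNBounded 𝕜 (c • s) := by
  simpa [image_smul] using hs.image (c • ContinuousLinearMap.id 𝕜 E)

theorem Bornology.IsVonNBounded.absConvexHull [PartialOrder 𝕜] [LocallyConvexSpace 𝕜 E]
    [ContinuousSMul 𝕜 E] {s : Set E} (hs : IsVonNBounded 𝕜 s) :
    IsVonNBounded 𝕜 (absConvexHull 𝕜 s) := by
  rw [(nhds_hasBasis_absConvex 𝕜 E).isVonNBounded_iff]
  rintro W ⟨hW, hWb, hWc⟩
  exact Filter.Eventually.mono (hs hW) fun c hc => absConvexHull_min hc ⟨hWb.smul c, hWc.smul c⟩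

theorem StrongDual.polar_closure (s : Set E) : polar 𝕜 (closure s) = polar 𝕜 s := by
  refine (LinearMap.polar_antitone _ subset_closure).antisymm fun f hf => ?_
  have hclosure : closure s ⊆ f ⁻¹' Metric.closedBall 0 1 :=
    closure_minimal (fun x hx => by simpa using hf x hx)
      (Metric.isClosed_closedBall.preimage f.continuous)
  exact fun x hx => by simpa using hclosure hx

theorem StrongDual.polar_image (T : E →L[𝕜] F) (s : Set E) :
    polar 𝕜 (T '' s) = (fun f : StrongDual 𝕜 F => f.comp T) ⁻¹' polar 𝕜 s := by
  ext f
  simp [mem_polar_iff]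

theorem StrongDual.hasBasis_nhds_zero_polar [ContinuousSMul 𝕜 E] :
    (𝓝 (0 : StrongDual 𝕜 E)).HasBasis (IsVonNBounded 𝕜) (polar 𝕜) := by
  refine (ContinuousLinearMap.hasBasis_nhds_zero_of_basis Metric.nhds_basis_closedBall).to_hasBasis
    (fun ⟨B, ε⟩ ⟨hB, hε⟩ => ?_)
    fun B hB => ⟨(B, 1), ⟨hB, one_pos⟩, fun f hf x hx => by simpa using hf x hx⟩
  obtain ⟨c, hc⟩ := NormedField.exists_lt_norm 𝕜 ε⁻¹
  have hc0 : 0 < ‖c‖ := (inv_pos.2 hε).trans hc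
  refine ⟨c • B, hB.smul c, fun f hf x hx => ?_⟩
  have hcfx : ‖c‖ * ‖f x‖ ≤ 1 := by
    simpa [norm_smul] using hf (c • x) (smul_mem_smul_set hx)
  rw [mem_closedBall_zero_iff]
  calc ‖f x‖ ≤ ‖c‖⁻¹ := by simpa using (le_inv_mul_iff₀ hc0).2 hcfx
    _ ≤ ε := inv_le_of_inv_le₀ hε hc.le

end TopologicalVectorSpace

section RealLocallyConvex

variable {E F : Type*} [AddCommGroup E] [Module ℝ E] [AddCommGroup F] [Module ℝ F]

theorem LinearMap.image_absConvexHull (T : E →ₗ[ℝ] F) (s : Set E) :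
    T '' absConvexHull ℝ s = absConvexHull ℝ (T '' s) := by
  simp only [← convexHull_union_neg_eq_absConvexHull, T.image_convexHull, image_union,
    image_neg_of_apply_neg_eq_neg fun x _ => map_neg T x]

variable [TopologicalSpace E] [TopologicalSpace F]

theorem StrongDual.subset_closedAbsConvexHull_of_polar_subset [IsTopologicalAddGroup E]
    [ContinuousSMul ℝ E] [LocallyConvexSpace ℝ E] {S A : Set E} (hS : S.Nonempty)
    (h : polar ℝ S ⊆ polar ℝ A) : A ⊆ closedAbsConvexHull ℝ S := by
  intro a ha
  by_contra ha'
  have hC := absConvex_convexClosedHull (𝕜 := ℝ) (s := S)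
  obtain ⟨f, u, hfC, hfa⟩ :=
    geometric_hahn_banach_closed_point hC.2 isClosed_closedAbsConvexHull ha'
  have hu : 0 < u := by
    simpa using hfC 0 (hC.1.zero_mem (hS.mono subset_closedAbsConvexHull))
  have hnorm : ∀ x, ‖(u⁻¹ • f) x‖ ≤ 1 ↔ |f x| ≤ u := fun x => by
    rw [smul_apply, smul_eq_mul, norm_mul, norm_inv,
      Real.norm_of_nonneg hu.le, Real.norm_eq_abs, inv_mul_le_iff₀ hu, mul_one]
  have hfS : u⁻¹ • f ∈ polar ℝ S := fun x hx => by
    have hxC : x ∈ closedAbsConvexHull ℝ S := subset_closedAbsConvexHull hx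
    have hneg := hfC (-x) (hC.1.neg_mem_iff.2 hxC)
    rw [map_neg] at hneg
    exact (hnorm x).2 (abs_le.2 ⟨by linarith, (hfC x hxC).le⟩)
  have hfa_le := (hnorm a).1 (h hfS a ha)
  linarith [le_abs_self (f a)]

theorem ContinuousLinearMap.exists_polar_image_subset_iff
    [ContinuousSMul ℝ E] [LocallyConvexSpace ℝ E] [IsTopologicalAddGroup F]
    [ContinuousSMul ℝ F] [LocallyConvexSpace ℝ F] (T : E →L[ℝ] F) (A : Set F) :
    (∃ B : Set E, IsVonNBounded ℝ B ∧ polar ℝ (T '' B) ⊆ polar ℝ A) ↔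
      ∃ B : Set E, IsVonNBounded ℝ B ∧ A ⊆ closure (T '' B) := by
  constructor
  · rintro ⟨B, hB, hBA⟩
    -- `insert 0` keeps the hull nonempty: `∅°` is everything while the hull of `∅` is empty.
    refine ⟨absConvexHull ℝ (insert 0 B), ((isVonNBounded_insert 0).2 hB).absConvexHull, ?_⟩
    have hpolar : polar ℝ (T '' insert 0 B) ⊆ polar ℝ A :=
      (LinearMap.polar_antitone _ (image_mono (subset_insert 0 B))).trans hBA
    calc A ⊆ closedAbsConvexHull ℝ (T '' insert 0 B) :=
          subset_closedAbsConvexHull_of_polar_subset (insert_nonempty 0 B |>.image T) hpolar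
      _ = closure (T '' absConvexHull ℝ (insert 0 B)) := by
          rw [closedAbsConvexHull_eq_closure_absConvexHull]
          exact congrArg closure ((T : E →ₗ[ℝ] F).image_absConvexHull _).symm
  · rintro ⟨B, hB, hAB⟩
    exact ⟨B, hB, polar_closure (𝕜 := ℝ) (T '' B) ▸ LinearMap.polar_antitone _ hAB⟩

end RealLocallyConvex

theorem adjoint_embedding_iff_almost_bounded_covering_general
    {E : Type*} [AddCommGroup E] [Module ℝ E] [TopologicalSpace E]
    [ContinuousSMul ℝ E] [LocallyConvexSpace ℝ E]
    {L : Type*} [AddCommGroup L] [Module ℝ L] [TopologicalSpace L]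
    [IsTopologicalAddGroup L] [ContinuousSMul ℝ L] [LocallyConvexSpace ℝ L]
    (T : E →L[ℝ] L) (hT : Function.Surjective T) :
    IsEmbedding (fun χ : L →L[ℝ] ℝ => χ.comp T) ↔
      ∀ A : Set L, IsVonNBounded ℝ A →
        ∃ B : Set E, IsVonNBounded ℝ B ∧ A ⊆ closure (T '' B) := by
  let Φ : (L →L[ℝ] ℝ) →L[ℝ] (E →L[ℝ] ℝ) := ContinuousLinearMap.precomp ℝ T
  have hinj : Function.Injective Φ := fun χ₁ χ₂ h => by
    ext y
    obtain ⟨x, rfl⟩ := hT y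
    exact DFunLike.congr_fun h x
  have hcomap : (𝓝 0).comap Φ ≤ 𝓝 0 ↔ ∀ A : Set L, IsVonNBounded ℝ A →
      ∃ B : Set E, IsVonNBounded ℝ B ∧ polar ℝ (T '' B) ⊆ polar ℝ A := by
    simp only [polar_image]
    exact (hasBasis_nhds_zero_polar.comap Φ).le_basis_iff hasBasis_nhds_zero_polar
  have hcont : 𝓝 0 ≤ (𝓝 0).comap Φ := by
    simpa using (Φ.continuous.tendsto 0).le_comap
  change IsEmbedding Φ ↔ _
  rw [isEmbedding_iff, IsTopologicalAddGroup.isInducing_iff_nhds_zero]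
  simp only [hinj, and_true, le_antisymm_iff, hcont, true_and, hcomap,
    T.exists_polar_image_subset_iff]

/-- Let `E, L` be locally convex spaces and `T : E → L` a continuous surjective linear
operator. Then the adjoint `T* : L'_β → E'_β` (between the strong duals) is a topological
embedding iff `T` is almost bounded-covering: for every bounded `A ⊆ L` there is a bounded
`B ⊆ E` with `A ⊆ closure (T(B))`. -/
theorem adjoint_embedding_iff_almost_bounded_covering
    {E : Type*} [AddCommGroup E] [Module ℝ E] [TopologicalSpace E]
    [IsTopologicalAddGroup E] [ContinuousSMul ℝ E] [LocallyConvexSpace ℝ E]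
    {L : Type*} [AddCommGroup L] [Module ℝ L] [TopologicalSpace L]
    [IsTopologicalAddGroup L] [ContinuousSMul ℝ L] [LocallyConvexSpace ℝ L]
    (T : E →L[ℝ] L) (hT : Function.Surjective T) :
    IsEmbedding (fun χ : L →L[ℝ] ℝ => χ.comp T) ↔
      ∀ A : Set L, IsVonNBounded ℝ A →
        ∃ B : Set E, IsVonNBounded ℝ B ∧ A ⊆ closure (T '' B) :=
  adjoint_embedding_iff_almost_bounded_covering_general T hT

end
end

section
/- Let 1 < p < ∞ and let p* be the conjugate exponent of p (1/p + 1/p* = 1). Then the Banach space ℓ_p is weakly sequentially p*-complete: every weakly p*-Cauchy sequence in ℓ_p weakly p*-converges to an element of ℓ_p. -/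
open Filter Topology Bornology Pointwise
open scoped ENNReal NNReal

noncomputable section

variable {E : Type*} [AddCommGroup E] [Module ℝ E] [TopologicalSpace E]

variable {F : Type*} [AddCommGroup F] [Module ℝ F] [TopologicalSpace F]

/-- A sequence is weakly `p`-Cauchy if for every pair of strictly increasing index sequences
`(k_n)`, `(j_n)`, the sequence `(x (k n) - x (j n))ₙ` is weakly `p`-summable. -/
def WeaklyPCauchy (p : ℝ≥0∞) (x : ℕ → F) : Prop :=
  ∀ k j : ℕ → ℕ, StrictMono k → StrictMono j →
    WeaklySummable p fun n => x (k n) - x (j n)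

/-!
A weakly `p*`-Cauchy sequence `(xₙ)` in `ℓ_p` is in particular weakly Cauchy, hence bounded by the
uniform boundedness principle and coordinatewise convergent; its coordinatewise limit `y` lies in
`ℓ_p`. For `1 < p < ∞` the coefficients `χ(eᵢ)` of a functional `χ` form an `ℓ_{p*}` sequence, so
`χ` is the norm limit of the finite combinations `∑_{i ∈ s} χ(eᵢ) eᵢ*` of coordinate functionals;
therefore a bounded, coordinatewise convergent sequence converges weakly, and `xₙ → y` weakly.
Finally, choosing `jₙ` with `|χ(x_{jₙ} - y)| ≤ 2⁻ⁿ`, the sequence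
`χ(xₙ - y) = χ(xₙ - x_{jₙ}) + χ(x_{jₙ} - y)` is a sum of two `ℓ_{p*}` sequences.
-/

open scoped Uniformity

theorem cauchySeq_of_forall_strictMono {α : Type*} [UniformSpace α] {a : ℕ → α}
    (h : ∀ k j : ℕ → ℕ, StrictMono k → StrictMono j →
      Tendsto (fun n => (a (k n), a (j n))) atTop (𝓤 α)) :
    CauchySeq a := by
  rw [cauchySeq_iff_tendsto, tendsto_iff_seq_tendsto]
  intro u hu
  refine tendsto_of_subseq_tendsto fun ψ hψ => ?_
  have hu' := hu.comp hψ
  rw [← prod_atTop_atTop_eq, tendsto_prod_iff'] at hu'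
  obtain ⟨φ₁, hφ₁, hk⟩ := strictMono_subseq_of_tendsto_atTop hu'.1
  obtain ⟨φ₂, hφ₂, hj⟩ :=
    strictMono_subseq_of_tendsto_atTop (hu'.2.comp hφ₁.tendsto_atTop)
  exact ⟨φ₁ ∘ φ₂, h _ _ (hk.comp hφ₂) hj⟩

theorem Memℓp.tendsto_cofinite_zero {ι : Type*} {E : ι → Type*} [∀ i, NormedAddCommGroup (E i)]
    {p : ℝ≥0∞} {f : ∀ i, E i} (hf : Memℓp f p) (hp : p ≠ ∞) :
    Tendsto (fun i => ‖f i‖) cofinite (𝓝 0) := by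
  rcases eq_or_ne p 0 with rfl | hp0
  · refine tendsto_const_nhds.congr' ?_
    filter_upwards [hf.finite_dsupport.compl_mem_cofinite] with i hi
    simp_all
  have hp' : 0 < p.toReal := ENNReal.toReal_pos hp0 hp
  have h := (hf.summable hp').tendsto_cofinite_zero.rpow_const (p := p.toReal⁻¹)
    (.inr (by positivity))
  rw [Real.zero_rpow (by positivity)] at h
  exact h.congr fun i => Real.rpow_rpow_inv (norm_nonneg _) hp'.ne'

theorem InLpC0.tendsto_zero {p : ℝ≥0∞} {f : ℕ → ℝ} (hf : InLpC0 p f) :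
    Tendsto f atTop (𝓝 0) := by
  rcases hf with ⟨hp, hf⟩ | ⟨-, hf⟩
  · rw [tendsto_zero_iff_norm_tendsto_zero, ← Nat.cofinite_eq_atTop]
    exact hf.tendsto_cofinite_zero hp
  · exact hf

theorem WeaklyPCauchy.cauchySeq_apply {p : ℝ≥0∞} {x : ℕ → F} (hx : WeaklyPCauchy p x)
    (χ : F →L[ℝ] ℝ) : CauchySeq fun n => χ (x n) := by
  refine cauchySeq_of_forall_strictMono fun k j hk hj => ?_
  rw [tendsto_uniformity_iff_dist_tendsto_zero]
  simpa [dist_eq_norm] using (hx k j hk hj χ).tendsto_zero.norm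

theorem memℓp_pow_of_lt_one {r : ℝ} (hr₀ : 0 ≤ r) (hr₁ : r < 1) {p : ℝ≥0∞} (hp : p ≠ 0) :
    Memℓp (fun n : ℕ => r ^ n) p := by
  have hfin : ∀ q : ℝ≥0∞, q ≠ 0 → q ≠ ∞ → Memℓp (fun n : ℕ => r ^ n) q := fun q hq₀ hq =>
    have hq' : 0 < q.toReal := ENNReal.toReal_pos hq₀ hq
    memℓp_gen <| by
      simpa [abs_of_nonneg hr₀, ← Real.rpow_pow_comm hr₀] using summable_geometric_of_lt_one
        (Real.rpow_nonneg hr₀ _) (Real.rpow_lt_one hr₀ hr₁ hq')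
  rcases eq_or_ne p ∞ with rfl | hp'
  · exact (hfin 1 one_ne_zero ENNReal.one_ne_top).of_exponent_ge le_top
  · exact hfin p hp hp'

theorem Filter.Tendsto.exists_strictMono_memℓp_comp {G : Type*} [NormedAddCommGroup G]
    {a : ℕ → G} (ha : Tendsto a atTop (𝓝 0)) {p : ℝ≥0∞} (hp : p ≠ 0) :
    ∃ j : ℕ → ℕ, StrictMono j ∧ Memℓp (a ∘ j) p := by
  have hsmall (n : ℕ) : ∀ᶠ k in atTop, ‖a k‖ < (1 / 2 : ℝ) ^ n :=
    (tendsto_order.1 (tendsto_zero_iff_norm_tendsto_zero.1 ha)).2 _ (by positivity)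
  obtain ⟨j, hj, hja⟩ := extraction_forall_of_eventually hsmall
  exact ⟨j, hj, (memℓp_pow_of_lt_one (by norm_num) (by norm_num) hp).mono fun n => (hja n).le⟩

theorem WeaklyPCauchy.weaklySummable_sub_of_tendsto {p : ℝ≥0∞} (hp : p ≠ 0) {x : ℕ → F} {y : F}
    (hx : WeaklyPCauchy p x) (hxy : ∀ χ : F →L[ℝ] ℝ, Tendsto (fun n => χ (x n - y)) atTop (𝓝 0)) :
    WeaklySummable p fun n => x n - y := by
  intro χ
  rcases eq_or_ne p ∞ with rfl | hp'
  · exact .inr ⟨rfl, hxy χ⟩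
  obtain ⟨j, hj, hjy⟩ := (hxy χ).exists_strictMono_memℓp_comp hp
  have hxj : Memℓp (fun n => χ (x n - x (j n))) p := by
    simpa [InLpC0, hp'] using hx id j strictMono_id hj χ
  refine .inl ⟨hp', ?_⟩
  convert hxj.add hjy using 1
  ext n
  simp

theorem isBounded_range_of_forall_isBounded_range_apply {𝕜 G ι : Type*} [RCLike 𝕜]
    [NormedAddCommGroup G] [NormedSpace 𝕜 G] {x : ι → G}
    (h : ∀ χ : StrongDual 𝕜 G, IsBounded (Set.range fun i => χ (x i))) :
    IsBounded (Set.range x) := by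
  simp only [isBounded_iff_forall_norm_le, Set.forall_mem_range] at h ⊢
  obtain ⟨C, hC⟩ := banach_steinhaus (g := fun i => NormedSpace.inclusionInDoubleDual 𝕜 G (x i)) h
  exact ⟨C, fun i => (NormedSpace.inclusionInDoubleDualLi 𝕜).norm_map (x i) ▸ hC i⟩

theorem Real.HolderConjugate.le_rpow_of_le_mul_rpow_inv {P Q S c : ℝ}
    (hPQ : P.HolderConjugate Q) (hS : 0 ≤ S) (hc : 0 ≤ c) (h : S ≤ c * S ^ P⁻¹) :
    S ≤ c ^ Q := by
  rcases hS.eq_or_lt with rfl | hS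
  · positivity
  have hsplit : S = S ^ Q⁻¹ * S ^ P⁻¹ := by
    rw [← Real.rpow_add hS, add_comm, hPQ.inv_add_inv_eq_one, Real.rpow_one]
  have hQ : S ^ Q⁻¹ ≤ c := by
    rw [hsplit] at h
    exact le_of_mul_le_mul_right (h.trans_eq (by rw [← hsplit])) (by positivity)
  calc S = (S ^ Q⁻¹) ^ Q := (Real.rpow_inv_rpow hS.le hPQ.symm.ne_zero).symm
    _ ≤ c ^ Q := by gcongr; exact hPQ.symm.nonneg

theorem Real.rpow_sub_one_eq_rpow_sub_two_mul {Q : ℝ} (hQ : 1 < Q) (t : ℝ) :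
    |t| ^ (Q - 1) = |t| ^ (Q - 2) * |t| := by
  rw [← Real.rpow_add_one' (abs_nonneg t) (by linarith)]
  ring_nf

theorem Real.abs_mul_abs_rpow_sub_two {Q : ℝ} (hQ : 1 < Q) (t : ℝ) :
    |t * |t| ^ (Q - 2)| = |t| ^ (Q - 1) := by
  rw [abs_mul, abs_of_nonneg (Real.rpow_nonneg (abs_nonneg t) _),
    rpow_sub_one_eq_rpow_sub_two_mul hQ, mul_comm]

theorem Real.mul_abs_rpow_sub_two_mul_self {Q : ℝ} (hQ : 1 < Q) (t : ℝ) :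
    t * |t| ^ (Q - 2) * t = |t| ^ Q := by
  have hQ' : |t| ^ Q = |t| ^ (Q - 1) * |t| := by
    rw [← Real.rpow_add_one' (abs_nonneg t) (by linarith)]
    ring_nf
  rw [hQ', rpow_sub_one_eq_rpow_sub_two_mul hQ, mul_assoc (|t| ^ _), abs_mul_abs_self]
  ring

theorem ContinuousLinearMap.tendsto_apply_of_tendsto_of_norm_le {𝕜 G H α : Type*}
    [NontriviallyNormedField 𝕜] [SeminormedAddCommGroup G] [NormedSpace 𝕜 G]
    [SeminormedAddCommGroup H] [NormedSpace 𝕜 H] {l : Filter α} [l.NeBot]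
    {φ : α → G →L[𝕜] H} {χ : G →L[𝕜] H} (hφ : Tendsto φ l (𝓝 χ)) {z : ℕ → G} {C : ℝ}
    (hz : ∀ n, ‖z n‖ ≤ C) (h : ∀ a, Tendsto (fun n => φ a (z n)) atTop (𝓝 0)) :
    Tendsto (fun n => χ (z n)) atTop (𝓝 0) := by
  refine TendstoUniformly.tendsto_of_eventually_tendsto (F := fun a n => φ a (z n)) (p := l)
    (L := fun _ => 0) ?_ (.of_forall h) tendsto_const_nhds
  rw [Metric.tendstoUniformly_iff]
  intro ε hε
  have hC : 0 < |C| + 1 := by positivity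
  filter_upwards [(tendsto_iff_norm_sub_tendsto_zero.1 hφ).eventually
    (gt_mem_nhds (div_pos hε hC))] with a ha n
  rw [dist_comm, dist_eq_norm, ← sub_apply]
  calc ‖(φ a - χ) (z n)‖ ≤ ‖φ a - χ‖ * (|C| + 1) :=
        (le_opNorm _ _).trans (by gcongr; exact (hz n).trans ((le_abs_self C).trans (by simp)))
    _ < ε / (|C| + 1) * (|C| + 1) := by gcongr
    _ = ε := div_mul_cancel₀ ε hC.ne'

namespace lp

variable {ι : Type*} [DecidableEq ι] {p q : ℝ≥0∞} [Fact (1 ≤ p)]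

theorem hasSum_mul_apply_single (hp : p ≠ ∞) (χ : lp (fun _ : ι => ℝ) p →L[ℝ] ℝ)
    (f : lp (fun _ : ι => ℝ) p) :
    HasSum (fun i => f i * χ (lp.single p i 1)) (χ f) := by
  convert (lp.hasSum_single hp f).mapL χ using 2 with i
  rw [← smul_eq_mul, ← map_smul, ← lp.single_smul, smul_eq_mul, mul_one]

theorem memℓp_apply_single [p.HolderConjugate q] (hp : p ≠ ∞) (hq : q ≠ ∞)
    (χ : lp (fun _ : ι => ℝ) p →L[ℝ] ℝ) : Memℓp (fun i => χ (lp.single p i 1)) q := by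
  have hPQ := ENNReal.HolderConjugate.toReal_of_ne_top hp hq
  set g : ι → ℝ := fun i => χ (lp.single p i 1)
  refine memℓp_gen' (C := ‖χ‖ ^ q.toReal) fun s => ?_
  set S := ∑ i ∈ s, ‖g i‖ ^ q.toReal
  -- the extremal vector for Hölder's inequality on the coordinates in `s`
  set f := ∑ i ∈ s, lp.single p i (g i * |g i| ^ (q.toReal - 2))
  have hχf : χ f = S := by
    simp only [f, S, map_sum, Real.norm_eq_abs]
    refine Finset.sum_congr rfl fun i _ => ?_
    rw [← mul_one (_ * _), ← smul_eq_mul, lp.single_smul, map_smul, smul_eq_mul,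
      Real.mul_abs_rpow_sub_two_mul_self hPQ.symm.lt]
  have hf : ‖f‖ = S ^ p.toReal⁻¹ := by
    rw [← Real.rpow_rpow_inv (norm_nonneg f) hPQ.ne_zero, lp.norm_sum_single hPQ.pos]
    congr 1
    refine Finset.sum_congr rfl fun i _ => ?_
    rw [Real.norm_eq_abs, Real.norm_eq_abs, Real.abs_mul_abs_rpow_sub_two hPQ.symm.lt,
      ← Real.rpow_mul (abs_nonneg _), hPQ.symm.sub_one_mul_conj]
  refine hPQ.le_rpow_of_le_mul_rpow_inv (by positivity) (norm_nonneg χ) ?_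
  calc S = χ f := hχf.symm
    _ ≤ ‖χ‖ * ‖f‖ := (le_abs_self _).trans (χ.le_opNorm f)
    _ = ‖χ‖ * S ^ p.toReal⁻¹ := by rw [hf]

theorem hasSum_apply_single_smul_evalCLM [p.HolderConjugate q] (hp : p ≠ ∞) (hq : q ≠ ∞)
    (χ : lp (fun _ : ι => ℝ) p →L[ℝ] ℝ) :
    HasSum (fun i => χ (lp.single p i 1) • lp.evalCLM ℝ (fun _ : ι => ℝ) p i) χ := by
  have : Fact (1 ≤ q) := ⟨ENNReal.HolderConjugate.one_le q p⟩
  let G : lp (fun _ : ι => ℝ) q := ⟨_, memℓp_apply_single hp hq χ⟩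
  let Φ := lp.dualPairing q p (fun _ : ι => ContinuousLinearMap.mul ℝ ℝ) (K := 1)
    fun _ => ContinuousLinearMap.opNorm_mul_le ℝ ℝ
  have hΦG : Φ G = χ := by
    ext f
    change ∑' i, G i * f i = χ f
    simpa [G, mul_comm] using (hasSum_mul_apply_single hp χ f).tsum_eq
  have hΦsingle (i : ι) (c : ℝ) : Φ (lp.single q i c) = c • lp.evalCLM ℝ (fun _ : ι => ℝ) p i := by
    ext f
    change ∑' j, (lp.single q i c : ι → ℝ) j * f j = c * f i
    simp [Pi.single_apply]
  simpa [hΦG, hΦsingle] using (lp.hasSum_single hq G).mapL Φ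

theorem tendsto_apply_zero_of_tendsto_coord [p.HolderConjugate q] (hp : p ≠ ∞) (hq : q ≠ ∞)
    {z : ℕ → lp (fun _ : ι => ℝ) p} {C : ℝ} (hz : ∀ n, ‖z n‖ ≤ C)
    (hcoord : ∀ i, Tendsto (fun n => z n i) atTop (𝓝 0)) (χ : lp (fun _ : ι => ℝ) p →L[ℝ] ℝ) :
    Tendsto (fun n => χ (z n)) atTop (𝓝 0) :=
  ContinuousLinearMap.tendsto_apply_of_tendsto_of_norm_le
    (hasSum_apply_single_smul_evalCLM hp hq χ) hz fun s => by
      simpa [lp.evalCLM] using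
        tendsto_finsetSum s fun i _ => (hcoord i).const_mul (χ (lp.single p i 1))

end lp

/-- Let `1 < p < ∞` and `p*` its conjugate exponent (`1/p + 1/p* = 1`). Then `ℓ_p` is weakly
sequentially `p*`-complete: every weakly `p*`-Cauchy sequence weakly `p*`-converges to an
element of `ℓ_p`. -/
theorem lp_weakly_sequentially_conj_complete (p pst : ℝ≥0∞) (hp1 : 1 < p) (hp2 : p ≠ ∞)
    (hconj : p⁻¹ + pst⁻¹ = 1) [Fact (1 ≤ p)]
    (x : ℕ → lp (fun _ : ℕ => ℝ) p) (hx : WeaklyPCauchy pst x) :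
    ∃ y : lp (fun _ : ℕ => ℝ) p, WeaklySummable pst fun n => x n - y := by
  have : p.HolderConjugate pst := ENNReal.holderConjugate_iff.2 hconj
  have hpst : pst ≠ ∞ := (ENNReal.HolderConjugate.ne_top_iff_ne_one pst p).2 hp1.ne'
  have hbdd : IsBounded (Set.range x) :=
    isBounded_range_of_forall_isBounded_range_apply fun χ => (hx.cauchySeq_apply χ).isBounded_range
  obtain ⟨C, hC⟩ := isBounded_iff_forall_norm_le.1 hbdd
  choose y hy using fun i =>
    cauchySeq_tendsto_of_complete (hx.cauchySeq_apply (lp.evalCLM ℝ (fun _ : ℕ => ℝ) p i))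
  let Y : lp (fun _ : ℕ => ℝ) p := ⟨y, lp.memℓp_of_tendsto hbdd (tendsto_pi_nhds.2 hy)⟩
  refine ⟨Y, hx.weaklySummable_sub_of_tendsto (ENNReal.HolderConjugate.ne_zero pst p) fun χ => ?_⟩
  refine lp.tendsto_apply_zero_of_tendsto_coord hp2 hpst (C := C + ‖Y‖) (fun n => ?_)
    (fun i => ?_) χ
  · exact (norm_sub_le _ _).trans (by gcongr; exact hC _ ⟨n, rfl⟩)
  · rw [← sub_self (y i)]
    exact (hy i).sub_const (y i)

end
end
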